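/- arXiv:2109.12747 — 4 statements merged into one kernel-verified Lean document; each statement's English description precedes it below -/
import Mathlib

section
/- Let α < β ≤ η < ξ be reals, set D := [α,β] ∪ [η,ξ], and let Φ : D → D be continuous and strictly increasing with Φ(α) > α, Φ(β) = β, Φ(η) = η and Φ(ξ) < ξ. Let y_* ∈ (Φ(ξ), ξ] and suppose φ̂ : [α,β] → [η, y_*] is a continuous strictly decreasing bijection with φ̂(α) = y_* and φ̂(β) = η satisfying φ̂(Φ(x)) = Φ(φ̂(x)) for all x ∈ [α,β]. Then the map φ : D → D defined by φ(x) := φ̂(x) for x ∈ [α,β] and φ(x) := φ̂^{-1}(Φ(x)) for x ∈ [η,ξ] is well defined, continuous, strictly decreasing on D, and satisfies φ∘φ = Φ on D. -/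
open Set Function

noncomputable section

/-- `x` is a fort of `F` on `[a,b]`: `F` is not strictly monotone on any
neighborhood of `x` in `[a,b]`. -/
def IsFort (a b : ℝ) (F : ℝ → ℝ) (x : ℝ) : Prop :=
  x ∈ Set.Icc a b ∧ ∀ ε : ℝ, 0 < ε →
    ¬ StrictMonoOn F (Set.Icc a b ∩ Set.Ioo (x - ε) (x + ε)) ∧
    ¬ StrictAntiOn F (Set.Icc a b ∩ Set.Ioo (x - ε) (x + ε))

/-- The number of forts `N(F)` of `F` on `[a,b]`. -/
noncomputable def nForts (a b : ℝ) (F : ℝ → ℝ) : ℕ :=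
  {x | IsFort a b F x}.ncard

/-- `H(F) = m`: the nonmonotonicity height of `F` on `[a,b]` equals `m`, i.e. `m` is
the least `i ≥ 0` with `N(F^i) = N(F^{i+1})`. -/
def HeightEq (a b : ℝ) (F : ℝ → ℝ) (m : ℕ) : Prop :=
  IsLeast {i : ℕ | nForts a b (F^[i]) = nForts a b (F^[i + 1])} m

/-- `F` is a PM function on `[a,b]` with forts `c 1 < ... < c v`
(`c 0 = a`, `c (v+1) = b`): `F` is continuous, maps `[a,b]` into itself,
is strictly monotone on each lap `[c i, c (i+1)]`, and each `c i`, `1 ≤ i ≤ v`,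
is a fort. -/
structure PMFun (a b : ℝ) (F : ℝ → ℝ) (v : ℕ) (c : ℕ → ℝ) : Prop where
  lt : a < b
  cont : ContinuousOn F (Set.Icc a b)
  maps : Set.MapsTo F (Set.Icc a b) (Set.Icc a b)
  c_zero : c 0 = a
  c_last : c (v + 1) = b
  c_mono : ∀ i ≤ v, c i < c (i + 1)
  lap_mono : ∀ i ≤ v,
    StrictMonoOn F (Set.Icc (c i) (c (i + 1))) ∨ StrictAntiOn F (Set.Icc (c i) (c (i + 1)))
  fort : ∀ i, 1 ≤ i → i ≤ v → IsFort a b F (c i)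

/-- `[d,e]` is a lap of `G` on `[a,b]`: a maximal interval of strict monotonicity,
bounded by forts or the endpoints of `[a,b]`, with no fort inside. -/
def IsLap (a b : ℝ) (G : ℝ → ℝ) (d e : ℝ) : Prop :=
  a ≤ d ∧ d < e ∧ e ≤ b ∧
  (StrictMonoOn G (Set.Icc d e) ∨ StrictAntiOn G (Set.Icc d e)) ∧
  (d = a ∨ IsFort a b G d) ∧ (e = b ∨ IsFort a b G e) ∧
  ∀ x ∈ Set.Ioo d e, ¬ IsFort a b G x

/-- The set of fixed points of `φ` in `[α,β]`. -/
def fixedSet (α β : ℝ) (φ : ℝ → ℝ) : Set ℝ := {x | x ∈ Set.Icc α β ∧ φ x = x}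

/-- `φ` is a reversing-correspondence on `[α,β]`. -/
def RevCorr (α β : ℝ) (φ : ℝ → ℝ) : Prop :=
  StrictMonoOn φ (Set.Icc α β) ∧ ContinuousOn φ (Set.Icc α β) ∧
  Set.MapsTo φ (Set.Icc α β) (Set.Icc α β) ∧
  ∃ ξ ∈ fixedSet α β φ, ∃ ω : ℝ → ℝ,
    Set.MapsTo ω (fixedSet α β φ) (fixedSet α β φ) ∧
    StrictAntiOn ω (fixedSet α β φ) ∧
    Set.SurjOn ω (fixedSet α β φ) (fixedSet α β φ) ∧
    ω ξ = ξ ∧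
    ((α ∈ fixedSet α β φ ∧ β ∈ fixedSet α β φ) ∨
      (α ∉ fixedSet α β φ ∧ β ∉ fixedSet α β φ)) ∧
    (∀ ξ₁ ∈ fixedSet α β φ, ∀ ξ₂ ∈ fixedSet α β φ, ξ₁ < ξ₂ → ξ₂ ≤ ξ →
      (∀ z ∈ Set.Ioo ξ₁ ξ₂, z ∉ fixedSet α β φ) →
      ∀ x ∈ Set.Ioo ξ₁ ξ₂, ∀ y ∈ Set.Ioo (ω ξ₂) (ω ξ₁),
        (φ x - x) * (φ y - y) < 0)

/-- gluing a decreasing solution `g` of the commuting equation on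
`[α,β]` with `g⁻¹ ∘ Φ` on `[η,ξ]` yields a continuous strictly decreasing square
iterative root of `Φ` on `D = [α,β] ∪ [η,ξ]`. -/
theorem stmt12 (α β η ξ : ℝ) (h1 : α < β) (h2 : β ≤ η) (h3 : η < ξ) (Φ : ℝ → ℝ)
    (hc : ContinuousOn Φ (Set.Icc α β ∪ Set.Icc η ξ))
    (hm : StrictMonoOn Φ (Set.Icc α β ∪ Set.Icc η ξ))
    (hmaps : Set.MapsTo Φ (Set.Icc α β ∪ Set.Icc η ξ) (Set.Icc α β ∪ Set.Icc η ξ))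
    (hα : α < Φ α) (hβ : Φ β = β) (hη : Φ η = η) (hξ : Φ ξ < ξ)
    (ys : ℝ) (hys : ys ∈ Set.Ioc (Φ ξ) ξ)
    (g : ℝ → ℝ) (hgc : ContinuousOn g (Set.Icc α β))
    (hgm : StrictAntiOn g (Set.Icc α β))
    (hgbij : Set.BijOn g (Set.Icc α β) (Set.Icc η ys))
    (hga : g α = ys) (hgb : g β = η)
    (hcomm : ∀ x ∈ Set.Icc α β, g (Φ x) = Φ (g x)) :
    ∃ φ : ℝ → ℝ,
      (∀ x ∈ Set.Icc α β, φ x = g x) ∧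
      (∀ x ∈ Set.Icc η ξ, φ x ∈ Set.Icc α β ∧ g (φ x) = Φ x) ∧
      ContinuousOn φ (Set.Icc α β ∪ Set.Icc η ξ) ∧
      StrictAntiOn φ (Set.Icc α β ∪ Set.Icc η ξ) ∧
      Set.MapsTo φ (Set.Icc α β ∪ Set.Icc η ξ) (Set.Icc α β ∪ Set.Icc η ξ) ∧
      ∀ x ∈ Set.Icc α β ∪ Set.Icc η ξ, φ (φ x) = Φ x := by
  have mα : α ∈ Set.Icc α β := ⟨le_refl _, h1.le⟩
  have mβ : β ∈ Set.Icc α β := ⟨h1.le, le_refl _⟩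
  have mη : η ∈ Set.Icc η ξ := ⟨le_refl _, h3.le⟩
  have mξ : ξ ∈ Set.Icc η ξ := ⟨h3.le, le_refl _⟩
  have hmono : MonotoneOn Φ (Set.Icc α β ∪ Set.Icc η ξ) := hm.monotoneOn
  -- η < ys
  have hηys : η < ys := by
    have := hmono (Or.inr mη) (Or.inr mξ) h3.le
    rw [hη] at this
    exact lt_of_le_of_lt this hys.1
  -- Φ maps [α,β] into [α,β]
  have ΦmapsA : ∀ x ∈ Set.Icc α β, Φ x ∈ Set.Icc α β := by
    intro x hx
    constructor
    · exact le_trans hα.le (hmono (Or.inl mα) (Or.inl hx) hx.1)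
    · have := hmono (Or.inl hx) (Or.inl mβ) hx.2
      rwa [hβ] at this
  -- Φ maps [η,ξ] into [η,ys]
  have ΦmapsB : ∀ x ∈ Set.Icc η ξ, Φ x ∈ Set.Icc η ys := by
    intro x hx
    constructor
    · have := hmono (Or.inr mη) (Or.inr hx) hx.1
      rwa [hη] at this
    · exact le_trans (hmono (Or.inr hx) (Or.inr mξ) hx.2) hys.1.le
  -- the homeomorphism given by g
  have hGmaps : ∀ x : Set.Icc α β, g x ∈ Set.Icc η ys := fun x => hgbij.mapsTo x.2
  set G : Set.Icc α β → Set.Icc η ys := fun x => ⟨g x, hGmaps x⟩ with hG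
  have hGbij : Function.Bijective G := by
    constructor
    · intro a b hab
      exact Subtype.ext (hgbij.injOn a.2 b.2 (congrArg Subtype.val hab))
    · intro y
      obtain ⟨x, hx, hxy⟩ := hgbij.surjOn y.2
      exact ⟨⟨x, hx⟩, Subtype.ext hxy⟩
  have hGcont : Continuous G := Continuous.subtype_mk (continuousOn_iff_continuous_restrict.1 hgc) _
  set e : Set.Icc α β ≃ Set.Icc η ys := Equiv.ofBijective G hGbij with he
  have heCont : Continuous e := hGcont
  set E : Set.Icc α β ≃ₜ Set.Icc η ys := heCont.homeoOfEquivCompactToT2 with hE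
  have hEcoe : ∀ x : Set.Icc α β, (E x : ℝ) = g x := fun x => rfl
  -- the inverse map h
  set h : ℝ → ℝ := fun y => if hy : y ∈ Set.Icc η ys then (E.symm ⟨y, hy⟩ : ℝ) else α with hh
  have hmem : ∀ y ∈ Set.Icc η ys, h y ∈ Set.Icc α β := by
    intro y hy; rw [hh]; simp only [dif_pos hy]; exact (E.symm ⟨y, hy⟩).2
  have hg_h : ∀ y ∈ Set.Icc η ys, g (h y) = y := by
    intro y hy
    rw [hh]; simp only [dif_pos hy]
    have := E.apply_symm_apply ⟨y, hy⟩
    have := congrArg Subtype.val this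
    rw [hEcoe] at this
    exact this
  have h_g : ∀ x ∈ Set.Icc α β, h (g x) = x := by
    intro x hx
    have hgx := hgbij.mapsTo hx
    rw [hh]; simp only [dif_pos hgx]
    have : E ⟨x, hx⟩ = ⟨g x, hgx⟩ := Subtype.ext (hEcoe ⟨x, hx⟩)
    rw [← this, E.symm_apply_apply]
  have h_cont : ContinuousOn h (Set.Icc η ys) := by
    rw [continuousOn_iff_continuous_restrict]
    have : Set.domRestrict (Set.Icc η ys) h = fun y => (E.symm y : ℝ) := by
      funext y
      rw [Set.restrict_apply, hh]
      simp only [dif_pos y.2]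
    rw [this]
    exact continuous_subtype_val.comp E.symm.continuous
  have h_anti : StrictAntiOn h (Set.Icc η ys) := by
    intro y1 h1' y2 h2' hlt
    rcases lt_trichotomy (h y2) (h y1) with hc1 | hc1 | hc1
    · exact hc1
    · exfalso
      have : g (h y1) = g (h y2) := by rw [hc1]
      rw [hg_h y1 h1', hg_h y2 h2'] at this
      exact absurd this (ne_of_lt hlt)
    · exfalso
      have := hgm (hmem y1 h1') (hmem y2 h2') hc1
      rw [hg_h y1 h1', hg_h y2 h2'] at this
      exact absurd hlt (not_lt.2 this.le)
  -- the glued map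
  set φ : ℝ → ℝ := fun x => if x ≤ β then g x else h (Φ x) with hφ
  have φ_eq1 : ∀ x ∈ Set.Icc α β, φ x = g x := by
    intro x hx; rw [hφ]; simp only [if_pos hx.2]
  have φ_eq2 : ∀ x ∈ Set.Icc η ξ, φ x = h (Φ x) := by
    intro x hx
    by_cases hxb : x ≤ β
    · -- then x = β = η
      have hxβ : x = β := le_antisymm hxb (le_trans h2 hx.1)
      have hβη : β = η := le_antisymm h2 (le_trans hx.1 hxb)
      rw [hφ]; simp only [if_pos hxb]
      have hgββ : g β = β := by rw [hgb, ← hβη]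
      have hhβ : h β = β := by nth_rewrite 1 [← hgββ]; exact h_g β mβ
      rw [hxβ, hβη, hη, ← hβη, hhβ, hgββ]
    · rw [hφ]; simp only [if_neg hxb]
  -- the six properties
  refine ⟨φ, φ_eq1, ?_, ?_, ?_, ?_, ?_⟩
  · intro x hx
    rw [φ_eq2 x hx]
    exact ⟨hmem _ (ΦmapsB x hx), hg_h _ (ΦmapsB x hx)⟩
  · -- continuity
    have csA : ContinuousOn φ (Set.Icc α β) := hgc.congr φ_eq1
    have csB : ContinuousOn φ (Set.Icc η ξ) := by
      refine ContinuousOn.congr ?_ φ_eq2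
      exact h_cont.comp (hc.mono Set.subset_union_right) ΦmapsB
    intro x hx
    have key : ∀ (s : Set ℝ), IsClosed s → ContinuousOn φ s →
        ContinuousWithinAt φ s x := by
      intro s hscl hscont
      by_cases hxs : x ∈ s
      · exact hscont x hxs
      · exact continuousWithinAt_of_notMem_closure (by rwa [hscl.closure_eq])
    exact (key _ isClosed_Icc csA).union (key _ isClosed_Icc csB)
  · -- strictly decreasing
    intro x hx y hy hxy
    rcases hx with hxA | hxB
    · rcases hy with hyA | hyB
      · rw [φ_eq1 x hxA, φ_eq1 y hyA]
        exact hgm hxA hyA hxy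
      · rw [φ_eq1 x hxA, φ_eq2 y hyB]
        have hb : h (Φ y) ≤ β := (hmem _ (ΦmapsB y hyB)).2
        rcases lt_or_eq_of_le hxA.2 with hxβ | hxβ
        · have : g β < g x := hgm hxA mβ hxβ
          rw [hgb] at this
          calc h (Φ y) ≤ β := hb
            _ ≤ η := h2
            _ < g x := this
        · -- x = β
          rw [hxβ, hgb]
          rcases lt_or_eq_of_le h2 with hβη | hβη
          · exact lt_of_le_of_lt hb hβη
          · -- β = η, y > η
            have hyη : η < y := by rw [← hβη, ← hxβ]; exact hxy
            have hΦy : η < Φ y := by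
              have := hm (Or.inr mη) (Or.inr hyB) hyη
              rwa [hη] at this
            have hη' : h η = β := by rw [← hgb, h_g β mβ]
            have := h_anti ⟨le_refl _, hηys.le⟩ (ΦmapsB y hyB) hΦy
            rw [hη', hβη] at this
            exact this
    · rcases hy with hyA | hyB
      · exfalso
        have : x < x := lt_of_lt_of_le hxy (le_trans hyA.2 (le_trans h2 hxB.1))
        exact lt_irrefl _ this
      · rw [φ_eq2 x hxB, φ_eq2 y hyB]
        exact h_anti (ΦmapsB x hxB) (ΦmapsB y hyB) (hm (Or.inr hxB) (Or.inr hyB) hxy)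
  · -- maps to
    intro x hx
    rcases hx with hxA | hxB
    · rw [φ_eq1 x hxA]
      have := hgbij.mapsTo hxA
      exact Or.inr ⟨this.1, le_trans this.2 hys.2⟩
    · rw [φ_eq2 x hxB]
      exact Or.inl (hmem _ (ΦmapsB x hxB))
  · -- square root property
    intro x hx
    rcases hx with hxA | hxB
    · rw [φ_eq1 x hxA]
      have hgx : g x ∈ Set.Icc η ξ := by
        have := hgbij.mapsTo hxA
        exact ⟨this.1, le_trans this.2 hys.2⟩
      rw [φ_eq2 _ hgx, ← hcomm x hxA, h_g _ (ΦmapsA x hxA)]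
    · rw [φ_eq2 x hxB, φ_eq1 _ (hmem _ (ΦmapsB x hxB)), hg_h _ (ΦmapsB x hxB)]
end
end

section
/- Let I = [a,b] and let F : I → I be a PM function (or strictly monotone). Then every iterate F^i (i ≥ 1) has only finitely many forts, and the sequence of fort numbers is nondecreasing: N(F^i) ≤ N(F^{i+1}) for every integer i ≥ 0, where F^0 = id and N(F^0) = 0. -/
open Set Function

noncomputable section

/-- Continuous injective on an ord-connected set is strictly monotone or antitone. -/
lemma mono_or_anti_of_injOn {G : ℝ → ℝ} {U : Set ℝ} (hU : U.OrdConnected)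
    (hc : ContinuousOn G U) (hi : InjOn G U) :
    StrictMonoOn G U ∨ StrictAntiOn G U := by
  by_cases h2 : ∃ p ∈ U, ∃ q ∈ U, p < q
  · obtain ⟨p, hp, q, hq, hpq⟩ := h2
    have hIcc : Icc p q ⊆ U := hU.out hp hq
    have hbig : ∀ x ∈ U, ∀ y ∈ U, Icc (min p x) (max q y) ⊆ U := by
      intro x hx y hy
      have h1 : min p x ∈ U := by rcases min_choice p x with h | h <;> rw [h] <;> assumption
      have h2 : max q y ∈ U := by rcases max_choice q y with h | h <;> rw [h] <;> assumption
      exact hU.out h1 h2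
    have key : ∀ x ∈ U, ∀ y ∈ U, x < y →
        (G p < G q → G x < G y) ∧ (G q < G p → G y < G x) := by
      intro x hx y hy hxy
      have hsub := hbig x hx y hy
      have hle : min p x ≤ max q y := le_trans (min_le_left _ _) (hpq.le.trans (le_max_left _ _))
      have hmem : ∀ z, min p x ≤ z → z ≤ max q y → z ∈ Icc (min p x) (max q y) :=
        fun z h1 h2 => ⟨h1, h2⟩
      have hpm : p ∈ Icc (min p x) (max q y) :=
        hmem p (min_le_left _ _) (hpq.le.trans (le_max_left _ _))
      have hqm : q ∈ Icc (min p x) (max q y) :=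
        hmem q ((min_le_left _ _).trans hpq.le) (le_max_left _ _)
      have hxm : x ∈ Icc (min p x) (max q y) :=
        hmem x (min_le_right _ _) (hxy.le.trans (le_max_right _ _))
      have hym : y ∈ Icc (min p x) (max q y) :=
        hmem y ((min_le_right _ _).trans hxy.le) (le_max_right _ _)
      rcases ContinuousOn.strictMonoOn_of_injOn_Icc' hle (hc.mono hsub) (hi.mono hsub) with
        hm | ha
      · exact ⟨fun _ => hm hxm hym hxy, fun hlt => absurd (hm hpm hqm hpq) (lt_asymm hlt)⟩
      · exact ⟨fun hlt => absurd (ha hpm hqm hpq) (lt_asymm hlt), fun _ => ha hxm hym hxy⟩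
    rcases lt_or_ge (G p) (G q) with h | h
    · exact Or.inl fun x hx y hy hxy => (key x hx y hy hxy).1 h
    · have h' : G q < G p := lt_of_le_of_ne h (fun he => hpq.ne' (hi hq hp he))
      exact Or.inr fun x hx y hy hxy => (key x hx y hy hxy).2 h'
  · push_neg at h2
    exact Or.inl fun x hx y hy hxy => absurd hxy (not_lt.2 (h2 x hx y hy))

/-- An interior maximum point is a fort. -/
lemma isFort_of_max (a b : ℝ) {G : ℝ → ℝ} {p q m : ℝ}
    (hp : p ∈ Icc a b) (hq : q ∈ Icc a b) (hm : m ∈ Ioo p q)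
    (hmax : ∀ z ∈ Icc p q, G z ≤ G m) : IsFort a b G m := by
  have hmab : m ∈ Icc a b := ⟨hp.1.trans hm.1.le, hm.2.le.trans hq.2⟩
  refine ⟨hmab, fun ε hε => ?_⟩
  set l := max p (m - ε) with hl
  set r := min q (m + ε) with hr
  have hlm : l < m := max_lt hm.1 (by linarith)
  have hmr : m < r := lt_min hm.2 (by linarith)
  set x1 := (l + m) / 2 with hx1
  set x2 := (m + r) / 2 with hx2
  have hx1l : l < x1 := by rw [hx1]; linarith
  have hx1m : x1 < m := by rw [hx1]; linarith
  have hmx2 : m < x2 := by rw [hx2]; linarith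
  have hx2r : x2 < r := by rw [hx2]; linarith
  have hpl : p ≤ l := le_max_left _ _
  have hrq : r ≤ q := min_le_left _ _
  have hεl : m - ε ≤ l := le_max_right _ _
  have hrε : r ≤ m + ε := min_le_right _ _
  have hx1pq : x1 ∈ Icc p q := ⟨hpl.trans hx1l.le, hx1m.le.trans (hm.2.le.trans le_rfl) |>.trans le_rfl⟩
  have hx2pq : x2 ∈ Icc p q := ⟨hm.1.le.trans hmx2.le, hx2r.le.trans hrq⟩
  have hIpq : Icc p q ⊆ Icc a b := Icc_subset_Icc hp.1 hq.2
  have hmpq : m ∈ Icc p q := ⟨hm.1.le, hm.2.le⟩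
  have hx1U : x1 ∈ Icc a b ∩ Ioo (m - ε) (m + ε) :=
    ⟨hIpq hx1pq, ⟨lt_of_le_of_lt hεl hx1l, by linarith⟩⟩
  have hx2U : x2 ∈ Icc a b ∩ Ioo (m - ε) (m + ε) :=
    ⟨hIpq hx2pq, ⟨by linarith, lt_of_lt_of_le hx2r hrε⟩⟩
  have hmU : m ∈ Icc a b ∩ Ioo (m - ε) (m + ε) := ⟨hmab, ⟨by linarith, by linarith⟩⟩
  constructor
  · intro hmono
    have h2 := hmono hmU hx2U hmx2
    exact absurd h2 (not_lt_of_ge (hmax x2 hx2pq))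
  · intro hanti
    have h1 := hanti hx1U hmU hx1m
    exact absurd h1 (not_lt_of_ge (hmax x1 hx1pq))

/-- An interior minimum point is a fort. -/
lemma isFort_of_min (a b : ℝ) {G : ℝ → ℝ} {p q m : ℝ}
    (hp : p ∈ Icc a b) (hq : q ∈ Icc a b) (hm : m ∈ Ioo p q)
    (hmin : ∀ z ∈ Icc p q, G m ≤ G z) : IsFort a b G m := by
  have hmab : m ∈ Icc a b := ⟨hp.1.trans hm.1.le, hm.2.le.trans hq.2⟩
  refine ⟨hmab, fun ε hε => ?_⟩
  set l := max p (m - ε) with hl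
  set r := min q (m + ε) with hr
  have hlm : l < m := max_lt hm.1 (by linarith)
  have hmr : m < r := lt_min hm.2 (by linarith)
  set x1 := (l + m) / 2 with hx1
  set x2 := (m + r) / 2 with hx2
  have hx1l : l < x1 := by rw [hx1]; linarith
  have hx1m : x1 < m := by rw [hx1]; linarith
  have hmx2 : m < x2 := by rw [hx2]; linarith
  have hx2r : x2 < r := by rw [hx2]; linarith
  have hpl : p ≤ l := le_max_left _ _
  have hrq : r ≤ q := min_le_left _ _
  have hεl : m - ε ≤ l := le_max_right _ _
  have hrε : r ≤ m + ε := min_le_right _ _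
  have hx1pq : x1 ∈ Icc p q := ⟨hpl.trans hx1l.le, (hx1m.le.trans hm.2.le)⟩
  have hx2pq : x2 ∈ Icc p q := ⟨hm.1.le.trans hmx2.le, hx2r.le.trans hrq⟩
  have hIpq : Icc p q ⊆ Icc a b := Icc_subset_Icc hp.1 hq.2
  have hx1U : x1 ∈ Icc a b ∩ Ioo (m - ε) (m + ε) :=
    ⟨hIpq hx1pq, ⟨lt_of_le_of_lt hεl hx1l, by linarith⟩⟩
  have hx2U : x2 ∈ Icc a b ∩ Ioo (m - ε) (m + ε) :=
    ⟨hIpq hx2pq, ⟨by linarith, lt_of_lt_of_le hx2r hrε⟩⟩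
  have hmU : m ∈ Icc a b ∩ Ioo (m - ε) (m + ε) := ⟨hmab, ⟨by linarith, by linarith⟩⟩
  constructor
  · intro hmono
    have h1 := hmono hx1U hmU hx1m
    exact absurd h1 (not_lt_of_ge (hmin x1 hx1pq))
  · intro hanti
    have h2 := hanti hmU hx2U hmx2
    exact absurd h2 (not_lt_of_ge (hmin x2 hx2pq))

/-- Between two points with equal values there is a fort. -/
lemma exists_fort_between (a b : ℝ) {G : ℝ → ℝ} (hc : ContinuousOn G (Icc a b))
    {p q : ℝ} (hp : p ∈ Icc a b) (hq : q ∈ Icc a b) (hpq : p < q) (heq : G p = G q) :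
    ∃ m ∈ Ioo p q, IsFort a b G m := by
  have hsub : Icc p q ⊆ Icc a b := Icc_subset_Icc hp.1 hq.2
  have hcpq : ContinuousOn G (Icc p q) := hc.mono hsub
  obtain ⟨m, hmI, hmax⟩ :=
    isCompact_Icc.exists_isMaxOn (nonempty_Icc.2 hpq.le) hcpq
  rw [isMaxOn_iff] at hmax
  by_cases hmo : m ∈ Ioo p q
  · exact ⟨m, hmo, isFort_of_max a b hp hq hmo hmax⟩
  · have hmpq : G m = G p := by
      rcases eq_or_lt_of_le hmI.1 with h | h
      · rw [← h]
      · have : m = q := by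
          rcases eq_or_lt_of_le hmI.2 with h2 | h2
          · exact h2
          · exact absurd ⟨h, h2⟩ hmo
        rw [this, heq]
    obtain ⟨m', hmI', hmin⟩ :=
      isCompact_Icc.exists_isMinOn (nonempty_Icc.2 hpq.le) hcpq
    rw [isMinOn_iff] at hmin
    by_cases hmo' : m' ∈ Ioo p q
    · exact ⟨m', hmo', isFort_of_min a b hp hq hmo' hmin⟩
    · have hmpq' : G m' = G p := by
        rcases eq_or_lt_of_le hmI'.1 with h | h
        · rw [← h]
        · have : m' = q := by
            rcases eq_or_lt_of_le hmI'.2 with h2 | h2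
            · exact h2
            · exact absurd ⟨h, h2⟩ hmo'
          rw [this, heq]
      -- G is constant on [p,q]
      have hconst : ∀ z ∈ Icc p q, G z = G p := by
        intro z hz
        have h1 := hmax z hz
        have h2 := hmin z hz
        rw [hmpq] at h1
        rw [hmpq'] at h2
        exact le_antisymm h1 h2
      set m0 := (p + q) / 2 with hm0
      have hm0o : m0 ∈ Ioo p q := ⟨by rw [hm0]; linarith, by rw [hm0]; linarith⟩
      refine ⟨m0, hm0o, isFort_of_max a b hp hq hm0o ?_⟩
      intro z hz
      rw [hconst z hz, hconst m0 ⟨hm0o.1.le, hm0o.2.le⟩]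

/-- Pigeonhole: a set with an element of a finite set between any two of its points is finite. -/
lemma finite_of_sep {L S : Set ℝ} (hS : S.Finite)
    (h : ∀ p ∈ L, ∀ q ∈ L, p < q → ∃ m ∈ S, m ∈ Ioo p q) : L.Finite := by
  by_contra hL
  have hL' : L.Infinite := hL
  set n := hS.toFinset.card with hn
  obtain ⟨T, hTL, hTfin, hTcard⟩ := hL'.exists_subset_ncard_eq (n + 2)
  set Tf := hTfin.toFinset with hTf
  have hTfc : Tf.card = n + 2 := by
    rw [hTf, ← Set.ncard_eq_toFinset_card T hTfin, hTcard]
  set e := Tf.orderIsoOfFin hTfc with he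
  have heL : ∀ i : Fin (n + 2), (e i : ℝ) ∈ L := fun i =>
    hTL (hTfin.mem_toFinset.1 (e i).2)
  have hemono : ∀ i j : Fin (n + 2), i < j → (e i : ℝ) < (e j : ℝ) := by
    intro i j hij
    exact_mod_cast e.strictMono hij
  have hexm : ∀ i : Fin (n + 1), ∃ m ∈ S,
      m ∈ Ioo (e i.castSucc : ℝ) (e i.succ : ℝ) := by
    intro i
    exact h _ (heL _) _ (heL _) (hemono _ _ (Fin.castSucc_lt_succ : i.castSucc < i.succ))
  choose f hfS hfI using hexm
  have hinj : Function.Injective f := by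
    intro i j hij
    by_contra hne
    rcases lt_or_gt_of_ne hne with hlt | hlt
    · have h1 : (e i.succ : ℝ) ≤ (e j.castSucc : ℝ) := by
        have : i.succ ≤ j.castSucc := by
          rw [Fin.le_def]
          simp only [Fin.val_succ, Fin.coe_castSucc]
          exact Fin.lt_def.1 hlt
        exact_mod_cast e.monotone this
      have := (hfI i).2.trans_le (h1.trans (hfI j).1.le)
      rw [hij] at this
      exact lt_irrefl _ this
    · have h1 : (e j.succ : ℝ) ≤ (e i.castSucc : ℝ) := by
        have : j.succ ≤ i.castSucc := by
          rw [Fin.le_def]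
          simp only [Fin.val_succ, Fin.coe_castSucc]
          exact Fin.lt_def.1 hlt
        exact_mod_cast e.monotone this
      have := (hfI j).2.trans_le (h1.trans (hfI i).1.le)
      rw [hij] at this
      exact lt_irrefl _ this
  have hcard : (Finset.univ : Finset (Fin (n + 1))).card ≤ hS.toFinset.card := by
    apply Finset.card_le_card_of_injOn f
    · intro i _; exact hS.mem_toFinset.2 (hfS i)
    · exact hinj.injOn
  rw [Finset.card_univ, Fintype.card_fin] at hcard
  omega

/-- Level sets of a function with finitely many forts are finite. -/
lemma level_finite (a b : ℝ) {G : ℝ → ℝ} (hc : ContinuousOn G (Icc a b))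
    (hS : {x | IsFort a b G x}.Finite) (y : ℝ) :
    {x | x ∈ Icc a b ∧ G x = y}.Finite := by
  apply finite_of_sep hS
  intro p hp q hq hpq
  obtain ⟨m, hm1, hm2⟩ := exists_fort_between a b hc hp.1 hq.1 hpq (hp.2.trans hq.2.symm)
  exact ⟨m, hm2, hm1⟩

/-- A fort of `G` is a fort of `F ∘ G`. -/
lemma isFort_comp (a b : ℝ) {G F : ℝ → ℝ} (hc : ContinuousOn G (Icc a b))
    {x : ℝ} (hx : IsFort a b G x) : IsFort a b (F ∘ G) x := by
  refine ⟨hx.1, fun ε hε => ?_⟩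
  obtain ⟨h1, h2⟩ := hx.2 ε hε
  set U := Icc a b ∩ Ioo (x - ε) (x + ε) with hU
  have hUsub : U ⊆ Icc a b := inter_subset_left
  have hUo : U.OrdConnected := Set.ordConnected_Icc.inter Set.ordConnected_Ioo
  have key : InjOn (F ∘ G) U → False := by
    intro hinj
    have hiG : InjOn G U := fun u hu w hw hGuw => hinj hu hw (by simp [Function.comp, hGuw])
    rcases mono_or_anti_of_injOn hUo (hc.mono hUsub) hiG with h | h
    exacts [h1 h, h2 h]
  exact ⟨fun h => key h.injOn, fun h => key h.injOn⟩

/-- Locate a non-nodal point inside a lap. -/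
lemma exists_lap {a b : ℝ} {F : ℝ → ℝ} {v : ℕ} {c : ℕ → ℝ} (hPM : PMFun a b F v c)
    {x : ℝ} (hx : x ∈ Icc a b) (hne : ∀ i ≤ v + 1, x ≠ c i) :
    ∃ i ≤ v, x ∈ Ioo (c i) (c (i + 1)) := by
  classical
  set P : ℕ → Prop := fun j => c j < x with hP
  have hP0 : P 0 := by
    rw [hP]
    simp only
    rw [hPM.c_zero]
    exact lt_of_le_of_ne hx.1 (fun h => hne 0 (Nat.zero_le _) (h.symm ▸ hPM.c_zero.symm))
  set i := Nat.findGreatest P (v + 1) with hi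
  have hspec : P i := Nat.findGreatest_spec (Nat.zero_le _) hP0
  have hile : i ≤ v + 1 := Nat.findGreatest_le _
  have hiv : i ≤ v := by
    rcases Nat.lt_or_ge i (v + 1) with h | h
    · omega
    · exfalso
      have : i = v + 1 := le_antisymm hile h
      rw [this] at hspec
      have : c (v + 1) < x := hspec
      rw [hPM.c_last] at this
      exact absurd hx.2 (not_le_of_gt this)
  have hgt : ¬ P (i + 1) :=
    Nat.findGreatest_is_greatest (Nat.lt_succ_self i) (by omega)
  have hxle : x ≤ c (i + 1) := le_of_not_gt hgt
  have hxlt : x < c (i + 1) := lt_of_le_of_ne hxle (hne (i + 1) (by omega))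
  exact ⟨i, hiv, ⟨hspec, hxlt⟩⟩

/-- The forts of a PM function are among the nodes. -/
lemma forts_subset {a b : ℝ} {F : ℝ → ℝ} {v : ℕ} {c : ℕ → ℝ} (hPM : PMFun a b F v c) :
    {x | IsFort a b F x} ⊆ c '' (Set.Iic (v + 1)) := by
  intro x hx
  by_contra hcon
  have hne : ∀ i ≤ v + 1, x ≠ c i := by
    intro i hi he
    exact hcon ⟨i, hi, he.symm⟩
  obtain ⟨i, hiv, hIoo⟩ := exists_lap hPM hx.1 hne
  set ε := min (x - c i) (c (i + 1) - x) with hε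
  have hεpos : 0 < ε := lt_min (by linarith [hIoo.1]) (by linarith [hIoo.2])
  have hsub : Icc a b ∩ Ioo (x - ε) (x + ε) ⊆ Icc (c i) (c (i + 1)) := by
    intro z hz
    have hz1 := hz.2.1
    have hz2 := hz.2.2
    constructor
    · have : x - ε ≥ c i := by
        have := min_le_left (x - c i) (c (i + 1) - x); rw [← hε] at this; linarith
      linarith
    · have : x + ε ≤ c (i + 1) := by
        have := min_le_right (x - c i) (c (i + 1) - x); rw [← hε] at this; linarith
      linarith
  obtain ⟨hA, hB⟩ := hx.2 ε hεpos
  rcases hPM.lap_mono i hiv with h | h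
  · exact hA (h.mono hsub)
  · exact hB (h.mono hsub)

/-- Forts of `F ∘ G` lie among forts of `G` and preimages of the nodes of `F`. -/
lemma fort_comp_subset {a b : ℝ} {F : ℝ → ℝ} {v : ℕ} {c : ℕ → ℝ} (hPM : PMFun a b F v c)
    {G : ℝ → ℝ} (hc : ContinuousOn G (Icc a b)) (hm : MapsTo G (Icc a b) (Icc a b)) :
    {x | IsFort a b (F ∘ G) x} ⊆
      {x | IsFort a b G x} ∪ ⋃ i ∈ Finset.range (v + 2), {x | x ∈ Icc a b ∧ G x = c i} := by
  intro x hx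
  rw [Set.mem_union]
  by_contra hcon
  push_neg at hcon
  obtain ⟨hnf, hnc⟩ := hcon
  have hxI : x ∈ Icc a b := hx.1
  have hnc' : ∀ i ≤ v + 1, G x ≠ c i := by
    intro i hi he
    apply hnc
    rw [Set.mem_iUnion₂]
    exact ⟨i, Finset.mem_range.2 (by omega), hxI, he⟩
  -- x is not a fort of G: get a monotone neighborhood
  have hex : ∃ ε > 0, StrictMonoOn G (Icc a b ∩ Ioo (x - ε) (x + ε)) ∨
      StrictAntiOn G (Icc a b ∩ Ioo (x - ε) (x + ε)) := by
    by_contra hno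
    push_neg at hno
    refine (hnf ⟨hxI, fun ε hε => ?_⟩ : False)
    have := hno ε hε
    exact this
  obtain ⟨ε0, hε0, hma⟩ := hex
  have hGx : G x ∈ Icc a b := hm hxI
  obtain ⟨i, hiv, hGxIoo⟩ := exists_lap hPM hGx hnc'
  have hcw : ContinuousWithinAt G (Icc a b) x := hc x hxI
  have hpre : G ⁻¹' (Ioo (c i) (c (i + 1))) ∈ nhdsWithin x (Icc a b) :=
    hcw (Ioo_mem_nhds hGxIoo.1 hGxIoo.2)
  rw [Metric.mem_nhdsWithin_iff] at hpre
  obtain ⟨δ, hδ, hball⟩ := hpre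
  set ε := min ε0 δ with hεd
  have hε : 0 < ε := lt_min hε0 hδ
  set U := Icc a b ∩ Ioo (x - ε) (x + ε) with hUd
  have hUsub0 : U ⊆ Icc a b ∩ Ioo (x - ε0) (x + ε0) := by
    apply Set.inter_subset_inter_right
    apply Ioo_subset_Ioo <;> [skip; skip] <;>
      [have := min_le_left ε0 δ; have := min_le_left ε0 δ] <;> linarith
  have hUball : U ⊆ Metric.ball x δ ∩ Icc a b := by
    intro z hz
    refine ⟨?_, hz.1⟩
    rw [Real.ball_eq_Ioo]
    have h1 := hz.2.1; have h2 := hz.2.2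
    have := min_le_right ε0 δ
    exact ⟨by linarith, by linarith⟩
  have hmapsU : MapsTo G U (Icc (c i) (c (i + 1))) := fun z hz =>
    Ioo_subset_Icc_self (hball (hUball hz))
  have hGU : StrictMonoOn G U ∨ StrictAntiOn G U := by
    rcases hma with h | h
    · exact Or.inl (h.mono hUsub0)
    · exact Or.inr (h.mono hUsub0)
  have hcomp : StrictMonoOn (F ∘ G) U ∨ StrictAntiOn (F ∘ G) U := by
    rcases hPM.lap_mono i hiv with hF | hF <;> rcases hGU with hG | hG
    · exact Or.inl (hF.comp hG hmapsU)
    · exact Or.inr (hF.comp_strictAntiOn hG hmapsU)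
    · exact Or.inr (hF.comp_strictMonoOn hG hmapsU)
    · exact Or.inl (hF.comp hG hmapsU)
  obtain ⟨hA, hB⟩ := hx.2 ε hε
  rcases hcomp with h | h
  exacts [hA h, hB h]

/-- every iterate of a PM (or strictly monotone) function has
finitely many forts, and the fort numbers are nondecreasing. -/
theorem stmt14 (a b : ℝ) (F : ℝ → ℝ) (v : ℕ) (c : ℕ → ℝ)
    (hPM : PMFun a b F v c) :
    (∀ i : ℕ, 1 ≤ i → {x | IsFort a b (F^[i]) x}.Finite) ∧
    (∀ i : ℕ, nForts a b (F^[i]) ≤ nForts a b (F^[i + 1])) := by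
  have hmaps : ∀ n : ℕ, MapsTo (F^[n]) (Icc a b) (Icc a b) := fun n => hPM.maps.iterate n
  have hcont : ∀ n : ℕ, ContinuousOn (F^[n]) (Icc a b) := by
    intro n
    induction n with
    | zero => simpa using continuousOn_id
    | succ k ih =>
      rw [Function.iterate_succ']
      exact hPM.cont.comp ih (hmaps k)
  have hfin : ∀ i : ℕ, 1 ≤ i → {x | IsFort a b (F^[i]) x}.Finite := by
    intro i hi
    induction i, hi using Nat.le_induction with
    | base =>
      rw [Function.iterate_one]
      exact ((Set.finite_Iic (v + 1)).image c).subset (forts_subset hPM)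
    | succ n hn ih =>
      have heq : F^[n + 1] = F ∘ F^[n] := Function.iterate_succ' F n
      rw [heq]
      apply Set.Finite.subset _ (fort_comp_subset hPM (hcont n) (hmaps n))
      apply ih.union
      apply Set.Finite.biUnion (Finset.range (v + 2)).finite_toSet
      intro j _
      exact level_finite a b (hcont n) ih (c j)
  refine ⟨hfin, fun i => ?_⟩
  cases i with
  | zero =>
    have hidset : {x | IsFort a b (F^[0]) x} = ∅ := by
      ext x
      simp only [Set.mem_setOf_eq, Set.mem_empty_iff_false, iff_false]
      intro hx
      apply (hx.2 1 one_pos).1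
      intro u _ w _ h
      simpa using h
    unfold nForts
    rw [hidset, Set.ncard_empty]
    exact Nat.zero_le _
  | succ n =>
    have hsub : {x | IsFort a b (F^[n + 1]) x} ⊆ {x | IsFort a b (F^[n + 1 + 1]) x} := by
      intro x hx
      show IsFort a b (F^[n + 1 + 1]) x
      have heq : F^[n + 1 + 1] = F ∘ F^[n + 1] := Function.iterate_succ' F (n + 1)
      rw [heq]
      exact isFort_comp a b (hcont (n + 1)) hx
    exact Set.ncard_le_ncard hsub (hfin (n + 2) (by omega))
end
end

section
/- Let I = [a,b] and let F : I → I be a PM function (or strictly monotone). If N(F^{i_0}) = N(F^{i_0+1}) for some integer i_0 ≥ 0, then N(F^{i_0+j}) = N(F^{i_0}) for every integer j ≥ 1. -/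
open Set Function

noncomputable section

namespace Stmt15Aux

def nbd (a b x ε : ℝ) : Set ℝ := Set.Icc a b ∩ Set.Ioo (x - ε) (x + ε)

def MA (G : ℝ → ℝ) (s : Set ℝ) : Prop := StrictMonoOn G s ∨ StrictAntiOn G s

lemma MA.mono {G : ℝ → ℝ} {s t : Set ℝ} (h : MA G s) (hsub : t ⊆ s) : MA G t :=
  h.imp (fun h' => h'.mono hsub) (fun h' => h'.mono hsub)

lemma MA.injOn {G : ℝ → ℝ} {s : Set ℝ} (h : MA G s) : Set.InjOn G s :=
  h.elim (fun h' => h'.injOn) (fun h' => h'.injOn)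

lemma MA.comp {G H : ℝ → ℝ} {s S : Set ℝ} (hG : MA G S) (hH : MA H s)
    (hm : Set.MapsTo H s S) : MA (fun t => G (H t)) s := by
  rcases hG with hG | hG <;> rcases hH with hH | hH
  · exact Or.inl (hG.comp hH hm)
  · exact Or.inr (hG.comp_strictAntiOn hH hm)
  · exact Or.inr (hG.comp_strictMonoOn hH hm)
  · exact Or.inl (hG.comp hH hm)

lemma nbd_mono {a b x ε ε' : ℝ} (h : ε' ≤ ε) : nbd a b x ε' ⊆ nbd a b x ε := by
  rintro t ⟨h1, h2, h3⟩
  exact ⟨h1, by linarith, by linarith⟩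

lemma isFort_iff {a b x : ℝ} {G : ℝ → ℝ} : IsFort a b G x ↔
    x ∈ Set.Icc a b ∧ ∀ ε : ℝ, 0 < ε → ¬ MA G (nbd a b x ε) := by
  unfold IsFort MA nbd
  constructor
  · rintro ⟨h1, h2⟩
    exact ⟨h1, fun ε hε hma => hma.elim (h2 ε hε).1 (h2 ε hε).2⟩
  · rintro ⟨h1, h2⟩
    exact ⟨h1, fun ε hε => ⟨fun hm => h2 ε hε (Or.inl hm), fun hm => h2 ε hε (Or.inr hm)⟩⟩

lemma not_isFort_iff {a b x : ℝ} {G : ℝ → ℝ} (hx : x ∈ Set.Icc a b) :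
    ¬ IsFort a b G x ↔ ∃ ε : ℝ, 0 < ε ∧ MA G (nbd a b x ε) := by
  rw [isFort_iff]
  simp only [hx, true_and]
  push_neg
  simp only [not_not]

lemma shrink {a b x ε δ : ℝ} {H : ℝ → ℝ} (hcont : ContinuousOn H (Set.Icc a b))
    (hx : x ∈ Set.Icc a b) (hε : 0 < ε) (hδ : 0 < δ) :
    ∃ ε' : ℝ, 0 < ε' ∧ ε' ≤ ε ∧ ∀ t ∈ nbd a b x ε', |H t - H x| < δ := by
  have h1 := hcont x hx
  rw [Metric.continuousWithinAt_iff] at h1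
  obtain ⟨r, hr, hrr⟩ := h1 δ hδ
  refine ⟨min ε r, lt_min hε hr, min_le_left _ _, ?_⟩
  rintro t ⟨ht1, ht2, ht3⟩
  have hmr : min ε r ≤ r := min_le_right _ _
  have : dist t x < r := by
    rw [Real.dist_eq, abs_lt]
    constructor <;> linarith
  simpa [Real.dist_eq] using hrr ht1 this

lemma injOn_MA {a b x ε : ℝ} {G : ℝ → ℝ} (hcont : ContinuousOn G (Set.Icc a b))
    (hx : x ∈ Set.Icc a b) (hε : 0 < ε) (hinj : Set.InjOn G (nbd a b x ε)) :
    MA G (nbd a b x (ε/2)) := by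
  set l := max a (x - ε/2) with hl
  set r := min b (x + ε/2) with hr
  have hJsub : Set.Icc l r ⊆ nbd a b x ε := by
    rintro t ⟨h1, h2⟩
    have hla : a ≤ t := le_trans (le_max_left _ _) h1
    have hlx : x - ε/2 ≤ t := le_trans (le_max_right _ _) h1
    have hrb : t ≤ b := le_trans h2 (min_le_left _ _)
    have hrx : t ≤ x + ε/2 := le_trans h2 (min_le_right _ _)
    exact ⟨⟨hla, hrb⟩, by constructor <;> linarith⟩
  have hlx : l ≤ x := max_le hx.1 (by linarith)
  have hxr : x ≤ r := le_min hx.2 (by linarith)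
  have hlr : l ≤ r := hlx.trans hxr
  have hMA : MA G (Set.Icc l r) :=
    ContinuousOn.strictMonoOn_of_injOn_Icc' hlr
      (hcont.mono (hJsub.trans Set.inter_subset_left)) (hinj.mono hJsub)
  refine hMA.mono ?_
  rintro t ⟨⟨ta, tb⟩, t1, t2⟩
  exact ⟨max_le ta (by linarith), le_min tb (by linarith)⟩


variable {a b : ℝ} {F : ℝ → ℝ} {v : ℕ} {c : ℕ → ℝ}

lemma iter_maps (hPM : PMFun a b F v c) :
    ∀ n, Set.MapsTo (F^[n]) (Set.Icc a b) (Set.Icc a b)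
  | 0 => fun x hx => by simpa using hx
  | n+1 => by
    rw [Function.iterate_succ']
    exact (hPM.maps).comp (iter_maps hPM n)

lemma iter_cont (hPM : PMFun a b F v c) :
    ∀ n, ContinuousOn (F^[n]) (Set.Icc a b)
  | 0 => by simpa using continuousOn_id
  | n+1 => by
    rw [Function.iterate_succ']
    exact ContinuousOn.comp hPM.cont (iter_cont hPM n) (iter_maps hPM n)

lemma find_lap (hPM : PMFun a b F v c) {u : ℝ} (h1 : a ≤ u) (h2 : u < b) :
    ∃ i ≤ v, c i ≤ u ∧ u < c (i+1) := by
  classical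
  set P : ℕ → Prop := fun i => c i ≤ u with hP
  have hP0 : P 0 := by rw [hP]; simpa [hPM.c_zero] using h1
  set i := Nat.findGreatest P v with hi
  have hle : i ≤ v := Nat.findGreatest_le v
  have hPi : P i := Nat.findGreatest_spec (Nat.zero_le v) hP0
  refine ⟨i, hle, hPi, ?_⟩
  rcases eq_or_lt_of_le hle with h | h
  · rw [h, hPM.c_last]; exact h2
  · have hng : ¬ P (i+1) :=
      Nat.findGreatest_is_greatest (Nat.lt_succ_self i) h
    exact not_le.1 hng

lemma c_le (hPM : PMFun a b F v c) : ∀ j ≤ v + 1, ∀ i ≤ j, c i ≤ c j := by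
  intro j
  induction j with
  | zero => intro _ i hi; simp [Nat.le_zero.mp hi]
  | succ k ih =>
    intro hk i hi
    rcases Nat.le_succ_iff.mp hi with h | h
    · exact le_trans (ih (by omega) i h) (hPM.c_mono k (by omega)).le
    · simp [h]

lemma lap_right (hPM : PMFun a b F v c) {u : ℝ} (hu : u ∈ Set.Icc a b) :
    ∃ δ : ℝ, 0 < δ ∧ MA F (Set.Icc a b ∩ Set.Icc u (u+δ)) := by
  rcases eq_or_lt_of_le hu.2 with hub | hub
  · refine ⟨1, one_pos, Or.inl ?_⟩
    rintro t ⟨⟨_, htb⟩, htu, _⟩ s ⟨⟨_, hsb⟩, hsu, _⟩ hts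
    exfalso
    rw [← hub] at htb hsb
    exact hts.ne ((le_antisymm htb htu).trans (le_antisymm hsb hsu).symm)
  · obtain ⟨i, hi, hci, hci1⟩ := find_lap hPM hu.1 hub
    refine ⟨c (i+1) - u, by linarith, (hPM.lap_mono i hi).imp (fun h => h.mono ?_) (fun h => h.mono ?_)⟩ <;>
    · rintro t ⟨_, ht1, ht2⟩
      exact ⟨hci.trans ht1, by linarith⟩

lemma lap_left (hPM : PMFun a b F v c) {u : ℝ} (hu : u ∈ Set.Icc a b) :
    ∃ δ : ℝ, 0 < δ ∧ MA F (Set.Icc a b ∩ Set.Icc (u-δ) u) := by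
  rcases eq_or_lt_of_le hu.1 with hua | hua
  · refine ⟨1, one_pos, Or.inl ?_⟩
    rintro t ⟨⟨ht, _⟩, _, ht'⟩ s ⟨⟨hs, _⟩, _, hs'⟩ hts
    exfalso
    rw [hua] at ht hs
    exact hts.ne ((le_antisymm ht' ht).trans (le_antisymm hs' hs).symm)
  · have hub : u ≤ b := hu.2
    -- find lap containing points just left of u: need i with c i < u ≤ c (i+1)
    rcases eq_or_lt_of_le hub with hbu | hbu
    · -- u = b : left lap is [c v, b]
      have hcv : c v < b := by
        have := hPM.c_mono v le_rfl; rwa [hPM.c_last] at this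
      refine ⟨b - c v, by linarith, (hPM.lap_mono v le_rfl).imp (fun h => h.mono ?_) (fun h => h.mono ?_)⟩ <;>
      · rintro t ⟨_, ht1, ht2⟩
        rw [hbu] at ht1 ht2
        exact ⟨by linarith, by rw [hPM.c_last]; linarith⟩
    · obtain ⟨i, hi, hci, hci1⟩ := find_lap hPM hu.1 hbu
      rcases eq_or_lt_of_le hci with hceq | hclt
      · -- c i = u ; use previous lap [c (i-1), c i]; i ≥ 1 since c 0 = a < u
        have hipos : 1 ≤ i := by
          rcases Nat.eq_zero_or_pos i with rfl | h
          · exfalso; rw [hPM.c_zero] at hceq; linarith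
          · exact h
        obtain ⟨k, rfl⟩ : ∃ k, i = k + 1 := ⟨i - 1, by omega⟩
        have hk : k ≤ v := by omega
        have hck : c k < c (k+1) := hPM.c_mono k hk
        refine ⟨u - c k, by rw [← hceq]; linarith, (hPM.lap_mono k hk).imp (fun h => h.mono ?_) (fun h => h.mono ?_)⟩ <;>
        · rintro t ⟨_, ht1, ht2⟩
          exact ⟨by linarith, by rw [hceq]; linarith⟩
      · refine ⟨u - c i, by linarith, (hPM.lap_mono i hi).imp (fun h => h.mono ?_) (fun h => h.mono ?_)⟩ <;>
        · rintro t ⟨_, ht1, ht2⟩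
          exact ⟨by linarith, by linarith⟩


lemma iterate_succ_fun (F : ℝ → ℝ) (n : ℕ) : F^[n+1] = fun t => F^[n] (F t) := by
  rw [Function.iterate_succ]; rfl

lemma iterate_succ_fun' (F : ℝ → ℝ) (n : ℕ) : F^[n+1] = fun t => F (F^[n] t) := by
  rw [Function.iterate_succ']; rfl

lemma end_step (hPM : PMFun a b F v c) {n : ℕ} {e : ℝ} (he : e = a ∨ e = b)
    (hne : ¬ IsFort a b (F^[n]) e) : ¬ IsFort a b (F^[n+1]) e := by
  have hab := hPM.lt.le
  have heI : e ∈ Set.Icc a b := by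
    rcases he with rfl | rfl
    · exact Set.left_mem_Icc.2 hab
    · exact Set.right_mem_Icc.2 hab
  rw [not_isFort_iff heI] at hne ⊢
  obtain ⟨ε, hε, hMA⟩ := hne
  set u := F^[n] e with hu
  have huI : u ∈ Set.Icc a b := iter_maps hPM n heI
  obtain ⟨δ₁, hδ₁, hR⟩ := lap_right hPM huI
  obtain ⟨δ₂, hδ₂, hL⟩ := lap_left hPM huI
  obtain ⟨ε', hε'0, hε'le, hsm⟩ := shrink (iter_cont hPM n) heI hε (lt_min hδ₁ hδ₂)
  have heN : e ∈ nbd a b e ε' := ⟨heI, by constructor <;> linarith⟩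
  refine ⟨ε', hε'0, ?_⟩
  have hMA' : MA (F^[n]) (nbd a b e ε') := hMA.mono (nbd_mono hε'le)
  rw [iterate_succ_fun' F n]
  have habs : ∀ t ∈ nbd a b e ε', |F^[n] t - u| < min δ₁ δ₂ := hsm
  rcases hMA' with hm | hm <;> rcases he with rfl | rfl
  · -- e = a, mono: image on right of u
    refine MA.comp hR (Or.inl hm) ?_
    intro t ht
    have h1 : u ≤ F^[n] t := by
      rcases eq_or_lt_of_le ht.1.1 with h | h
      · rw [← h]
      · exact (hm heN ht h).le
    have h2 := abs_lt.1 (habs t ht)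
    have := min_le_left δ₁ δ₂
    exact ⟨iter_maps hPM n ht.1, h1, by linarith⟩
  · -- e = b, mono: image on left of u
    refine MA.comp hL (Or.inl hm) ?_
    intro t ht
    have h1 : F^[n] t ≤ u := by
      rcases eq_or_lt_of_le ht.1.2 with h | h
      · rw [h]
      · exact (hm ht heN h).le
    have h2 := abs_lt.1 (habs t ht)
    have := min_le_right δ₁ δ₂
    exact ⟨iter_maps hPM n ht.1, by linarith, h1⟩
  · -- e = a, anti: image on left of u
    refine MA.comp hL (Or.inr hm) ?_
    intro t ht
    have h1 : F^[n] t ≤ u := by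
      rcases eq_or_lt_of_le ht.1.1 with h | h
      · rw [← h]
      · exact (hm heN ht h).le
    have h2 := abs_lt.1 (habs t ht)
    have := min_le_right δ₁ δ₂
    exact ⟨iter_maps hPM n ht.1, by linarith, h1⟩
  · -- e = b, anti: image on right of u
    refine MA.comp hR (Or.inr hm) ?_
    intro t ht
    have h1 : u ≤ F^[n] t := by
      rcases eq_or_lt_of_le ht.1.2 with h | h
      · rw [h]
      · exact (hm ht heN h).le
    have h2 := abs_lt.1 (habs t ht)
    have := min_le_left δ₁ δ₂
    exact ⟨iter_maps hPM n ht.1, h1, by linarith⟩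

lemma id_not_fort (hPM : PMFun a b F v c) {x : ℝ} : ¬ IsFort a b (F^[0]) x := by
  intro hx
  refine (isFort_iff.1 hx).2 1 one_pos (Or.inl ?_)
  simp only [Function.iterate_zero]
  exact fun s _ t _ h => h

lemma end_not_fort (hPM : PMFun a b F v c) {e : ℝ} (he : e = a ∨ e = b) :
    ∀ n, ¬ IsFort a b (F^[n]) e
  | 0 => id_not_fort hPM
  | n+1 => end_step hPM he (end_not_fort hPM he n)

lemma fort_mono (hPM : PMFun a b F v c) {n : ℕ} {x : ℝ}
    (hx : IsFort a b (F^[n]) x) : IsFort a b (F^[n+1]) x := by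
  have hxI : x ∈ Set.Icc a b := hx.1
  by_contra hc
  rw [not_isFort_iff hxI] at hc
  obtain ⟨ε, hε, hMA⟩ := hc
  have hinj : Set.InjOn (F^[n]) (nbd a b x ε) := by
    intro t1 h1 t2 h2 heq
    refine hMA.injOn h1 h2 ?_
    rw [Function.iterate_succ_apply', heq, Function.iterate_succ_apply']
  exact (isFort_iff.1 hx).2 (ε/2) (by linarith) (injOn_MA (iter_cont hPM n) hxI hε hinj)

lemma fort_step (hPM : PMFun a b F v c) {n : ℕ} {x : ℝ} (hx : x ∈ Set.Icc a b)
    (h1 : ¬ IsFort a b (F^[n]) x) (h2 : ¬ IsFort a b F (F^[n] x)) :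
    ¬ IsFort a b (F^[n+1]) x := by
  rw [not_isFort_iff hx] at h1 ⊢
  rw [not_isFort_iff (iter_maps hPM n hx)] at h2
  obtain ⟨ε, hε, hH⟩ := h1
  obtain ⟨δ, hδ, hG⟩ := h2
  obtain ⟨ε', hε'0, hε'le, hsm⟩ := shrink (iter_cont hPM n) hx hε hδ
  refine ⟨ε', hε'0, ?_⟩
  rw [iterate_succ_fun' F n]
  refine MA.comp hG (hH.mono (nbd_mono hε'le)) ?_
  intro t ht
  have h3 := abs_lt.1 (hsm t ht)
  exact ⟨iter_maps hPM n ht.1, by constructor <;> linarith⟩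


lemma fort_base_subset (hPM : PMFun a b F v c) :
    {x | IsFort a b F x} ⊆ c '' (Set.Icc 1 v) := by
  intro x hx
  have hxI : x ∈ Set.Icc a b := hx.1
  have hnot : ∀ i ≤ v, ∀ ε : ℝ, 0 < ε →
      nbd a b x ε ⊆ Set.Icc (c i) (c (i+1)) → False := by
    intro i hi ε hε hsub
    exact (isFort_iff.1 hx).2 ε hε
      ((hPM.lap_mono i hi).imp (fun h => h.mono hsub) (fun h => h.mono hsub))
  rcases eq_or_lt_of_le hxI.2 with hxb | hxb
  · exfalso
    have hcv : c v < b := by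
      have := hPM.c_mono v le_rfl; rwa [hPM.c_last] at this
    refine hnot v le_rfl (b - c v) (by linarith) ?_
    rintro t ⟨⟨_, htb⟩, ht1, _⟩
    rw [hxb] at ht1
    exact ⟨by linarith, by rw [hPM.c_last]; exact htb⟩
  · obtain ⟨i, hi, hci, hci1⟩ := find_lap hPM hxI.1 hxb
    rcases eq_or_lt_of_le hci with hcx | hcx
    · rcases Nat.eq_zero_or_pos i with rfl | hipos
      · exfalso
        refine hnot 0 (Nat.zero_le v) (c 1 - x) (by linarith) ?_
        rintro t ⟨⟨hta, _⟩, _, ht2⟩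
        exact ⟨by rw [hPM.c_zero]; exact hta, by linarith⟩
      · exact ⟨i, ⟨hipos, hi⟩, hcx⟩
    · exfalso
      refine hnot i hi (min (x - c i) (c (i+1) - x)) (lt_min (by linarith) (by linarith)) ?_
      rintro t ⟨_, ht1, ht2⟩
      have h1 := min_le_left (x - c i) (c (i+1) - x)
      have h2 := min_le_right (x - c i) (c (i+1) - x)
      exact ⟨by linarith, by linarith⟩

lemma fort_base_finite (hPM : PMFun a b F v c) : {x | IsFort a b F x}.Finite :=
  ((Set.finite_Icc 1 v).image c).subset (fort_base_subset hPM)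

lemma fiber_finite (hPM : PMFun a b F v c) (p : ℝ) :
    {t | t ∈ Set.Icc a b ∧ F t = p}.Finite := by
  have hcover : {t | t ∈ Set.Icc a b ∧ F t = p} ⊆
      ⋃ i ∈ Set.Iic v, {t | t ∈ Set.Icc (c i) (c (i+1)) ∧ F t = p} := by
    rintro t ⟨htI, htp⟩
    rcases eq_or_lt_of_le htI.2 with h | h
    · have hcv : c v < c (v+1) := hPM.c_mono v le_rfl
      refine Set.mem_biUnion (Set.mem_Iic.2 le_rfl) ⟨⟨?_, ?_⟩, htp⟩
      · rw [h, ← hPM.c_last]; exact hcv.le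
      · rw [h, ← hPM.c_last]
    · obtain ⟨i, hi, h1, h2⟩ := find_lap hPM htI.1 h
      exact Set.mem_biUnion (Set.mem_Iic.2 hi) ⟨⟨h1, h2.le⟩, htp⟩
  refine Set.Finite.subset (Set.Finite.biUnion (Set.finite_Iic v) ?_) hcover
  rintro i hi
  rcases le_or_gt i v with hiv | hiv
  · refine Set.Subsingleton.finite ?_
    rintro t1 ⟨ht1, hp1⟩ t2 ⟨ht2, hp2⟩
    exact MA.injOn (hPM.lap_mono i hiv) ht1 ht2 (hp1.trans hp2.symm)
  · exact absurd (Set.mem_Iic.1 hi) (not_le.2 hiv)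

lemma preim_finite (hPM : PMFun a b F v c) {P : Set ℝ} (hP : P.Finite) :
    {t | t ∈ Set.Icc a b ∧ F t ∈ P}.Finite := by
  have hsub : {t | t ∈ Set.Icc a b ∧ F t ∈ P} ⊆
      ⋃ p ∈ P, {t | t ∈ Set.Icc a b ∧ F t = p} := by
    rintro t ⟨h1, h2⟩
    exact Set.mem_biUnion h2 ⟨h1, rfl⟩
  exact ((hP.biUnion fun p _ => fiber_finite hPM p).subset hsub)

lemma iter_preim_finite (hPM : PMFun a b F v c) :
    ∀ n {P : Set ℝ}, P.Finite → {t | t ∈ Set.Icc a b ∧ F^[n] t ∈ P}.Finite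
  | 0, P, hP => hP.subset (fun t ht => by simpa using ht.2)
  | n+1, P, hP => by
    have hA := iter_preim_finite hPM n hP
    refine (preim_finite hPM hA).subset ?_
    rintro t ⟨ht, htP⟩
    exact ⟨ht, hPM.maps ht, by rwa [← Function.iterate_succ_apply]⟩

lemma forts_finite (hPM : PMFun a b F v c) :
    ∀ n, {x | IsFort a b (F^[n]) x}.Finite
  | 0 => by
    refine Set.finite_empty.subset ?_
    intro x hx
    exact absurd hx (id_not_fort hPM)
  | n+1 => by
    refine (((forts_finite hPM n).union
      (iter_preim_finite hPM n (fort_base_finite hPM))).subset ?_)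
    intro x hx
    by_cases h1 : IsFort a b (F^[n]) x
    · exact Or.inl h1
    · by_cases h2 : IsFort a b F (F^[n] x)
      · exact Or.inr ⟨hx.1, h2⟩
      · exact absurd hx (fort_step hPM hx.1 h1 h2)


lemma stab_step (hPM : PMFun a b F v c) {n : ℕ}
    (hEq : {x | IsFort a b (F^[n]) x} = {x | IsFort a b (F^[n+1]) x}) :
    ∀ x : ℝ, IsFort a b (F^[n+1+1]) x → IsFort a b (F^[n+1]) x := by
  intro x hx2
  by_contra h1
  have hxI : x ∈ Set.Icc a b := hx2.1
  rcases eq_or_lt_of_le hxI.1 with hax | hax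
  · exact end_not_fort hPM (Or.inl hax.symm) (n+1+1) hx2
  rcases eq_or_lt_of_le hxI.2 with hxb | hxb
  · exact end_not_fort hPM (Or.inr hxb) (n+1+1) hx2
  -- interior case
  rw [not_isFort_iff hxI] at h1
  obtain ⟨ε, hε, hMA1⟩ := h1
  have hFinj : Set.InjOn F (nbd a b x ε) := by
    intro t1 ht1 t2 ht2 heq
    refine hMA1.injOn ht1 ht2 ?_
    rw [Function.iterate_succ_apply, heq, Function.iterate_succ_apply]
  have hFMA : MA F (nbd a b x (ε/2)) := injOn_MA hPM.cont hxI hε hFinj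
  have hε₀ : (0:ℝ) < ε/2 := by linarith
  have hMA1' : MA (F^[n+1]) (nbd a b x (ε/2)) := hMA1.mono (nbd_mono (by linarith))
  have hy : F x ∈ Set.Icc a b := hPM.maps hxI
  by_cases hyf : IsFort a b (F^[n+1]) (F x)
  · -- F x is a fort of F^[n+1], hence of F^[n]; derive a contradiction
    have hyf' : IsFort a b (F^[n]) (F x) := by
      have : F x ∈ {z | IsFort a b (F^[n+1]) z} := hyf
      rw [← hEq] at this
      exact this
    set γ := min (ε/4) (min (x - a) (b - x)) with hγ
    have hγ0 : 0 < γ := lt_min (by linarith) (lt_min (by linarith) (by linarith))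
    have hγa : γ ≤ x - a := le_trans (min_le_right _ _) (min_le_left _ _)
    have hγb : γ ≤ b - x := le_trans (min_le_right _ _) (min_le_right _ _)
    have hγε : γ ≤ ε/4 := min_le_left _ _
    have hJI : Set.Icc (x-γ) (x+γ) ⊆ nbd a b x (ε/2) := by
      rintro t ⟨h1', h2'⟩
      exact ⟨⟨by linarith, by linarith⟩, by constructor <;> linarith⟩
    have hcJ : ContinuousOn F (Set.Icc (x-γ) (x+γ)) :=
      hPM.cont.mono ((hJI.trans Set.inter_subset_left))
    have hxmem : x - γ ≤ x + γ := by linarith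
    have hm1 : x - γ ∈ Set.Icc (x-γ) (x+γ) := ⟨le_rfl, by linarith⟩
    have hm2 : x + γ ∈ Set.Icc (x-γ) (x+γ) := ⟨by linarith, le_rfl⟩
    have hmx : x ∈ Set.Icc (x-γ) (x+γ) := ⟨by linarith, by linarith⟩
    have hFJ : MA F (Set.Icc (x-γ) (x+γ)) := hFMA.mono hJI
    have hiter : ∀ t : ℝ, F^[n+1] t = F^[n] (F t) := fun t => Function.iterate_succ_apply F n t
    rcases hFJ with hFm | hFm
    · -- F increasing on J
      have hp : F (x-γ) < F x := hFm hm1 hmx (by linarith)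
      have hq : F x < F (x+γ) := hFm hmx hm2 (by linarith)
      have hIVT := intermediate_value_Icc hxmem hcJ
      set δ := min (F x - F (x-γ)) (F (x+γ) - F x) with hδdef
      have hδ0 : 0 < δ := lt_min (by linarith) (by linarith)
      have hsub : nbd a b (F x) δ ⊆ Set.Icc (F (x-γ)) (F (x+γ)) := by
        rintro u ⟨_, hu1, hu2⟩
        have l1 := min_le_left (F x - F (x-γ)) (F (x+γ) - F x)
        have l2 := min_le_right (F x - F (x-γ)) (F (x+γ) - F x)
        exact ⟨by linarith, by linarith⟩
      have pre : ∀ u1 ∈ nbd a b (F x) δ, ∀ u2 ∈ nbd a b (F x) δ, u1 < u2 →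
          ∃ x1 ∈ Set.Icc (x-γ) (x+γ), ∃ x2 ∈ Set.Icc (x-γ) (x+γ),
            F x1 = u1 ∧ F x2 = u2 ∧ x1 < x2 := by
        intro u1 hu1 u2 hu2 h12
        obtain ⟨x1, hx1J, hfx1⟩ := hIVT (hsub hu1)
        obtain ⟨x2, hx2J, hfx2⟩ := hIVT (hsub hu2)
        refine ⟨x1, hx1J, x2, hx2J, hfx1, hfx2, ?_⟩
        by_contra hcon
        push_neg at hcon
        rcases eq_or_lt_of_le hcon with h | h
        · rw [← h, hfx2] at hfx1; linarith
        · have := hFm hx2J hx1J h; rw [hfx1, hfx2] at this; linarith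
      refine (isFort_iff.1 hyf').2 δ hδ0 ?_
      rcases hMA1' with h1m | h1m
      · refine Or.inl ?_
        intro u1 hu1 u2 hu2 h12
        obtain ⟨x1, hx1J, x2, hx2J, hf1, hf2, hlt⟩ := pre u1 hu1 u2 hu2 h12
        have := h1m (hJI hx1J) (hJI hx2J) hlt
        rw [hiter x1, hiter x2, hf1, hf2] at this
        exact this
      · refine Or.inr ?_
        intro u1 hu1 u2 hu2 h12
        obtain ⟨x1, hx1J, x2, hx2J, hf1, hf2, hlt⟩ := pre u1 hu1 u2 hu2 h12
        have := h1m (hJI hx1J) (hJI hx2J) hlt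
        rw [hiter x1, hiter x2, hf1, hf2] at this
        exact this
    · -- F decreasing on J
      have hp : F (x+γ) < F x := hFm hmx hm2 (by linarith)
      have hq : F x < F (x-γ) := hFm hm1 hmx (by linarith)
      have hIVT := intermediate_value_Icc' hxmem hcJ
      set δ := min (F x - F (x+γ)) (F (x-γ) - F x) with hδdef
      have hδ0 : 0 < δ := lt_min (by linarith) (by linarith)
      have hsub : nbd a b (F x) δ ⊆ Set.Icc (F (x+γ)) (F (x-γ)) := by
        rintro u ⟨_, hu1, hu2⟩
        have l1 := min_le_left (F x - F (x+γ)) (F (x-γ) - F x)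
        have l2 := min_le_right (F x - F (x+γ)) (F (x-γ) - F x)
        exact ⟨by linarith, by linarith⟩
      have pre : ∀ u1 ∈ nbd a b (F x) δ, ∀ u2 ∈ nbd a b (F x) δ, u1 < u2 →
          ∃ x1 ∈ Set.Icc (x-γ) (x+γ), ∃ x2 ∈ Set.Icc (x-γ) (x+γ),
            F x1 = u1 ∧ F x2 = u2 ∧ x2 < x1 := by
        intro u1 hu1 u2 hu2 h12
        obtain ⟨x1, hx1J, hfx1⟩ := hIVT (hsub hu1)
        obtain ⟨x2, hx2J, hfx2⟩ := hIVT (hsub hu2)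
        refine ⟨x1, hx1J, x2, hx2J, hfx1, hfx2, ?_⟩
        by_contra hcon
        push_neg at hcon
        rcases eq_or_lt_of_le hcon with h | h
        · rw [h, hfx2] at hfx1; linarith
        · have := hFm hx1J hx2J h; rw [hfx1, hfx2] at this; linarith
      refine (isFort_iff.1 hyf').2 δ hδ0 ?_
      rcases hMA1' with h1m | h1m
      · refine Or.inr ?_
        intro u1 hu1 u2 hu2 h12
        obtain ⟨x1, hx1J, x2, hx2J, hf1, hf2, hlt⟩ := pre u1 hu1 u2 hu2 h12
        have := h1m (hJI hx2J) (hJI hx1J) hlt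
        rw [hiter x1, hiter x2, hf1, hf2] at this
        exact this
      · refine Or.inl ?_
        intro u1 hu1 u2 hu2 h12
        obtain ⟨x1, hx1J, x2, hx2J, hf1, hf2, hlt⟩ := pre u1 hu1 u2 hu2 h12
        have := h1m (hJI hx2J) (hJI hx1J) hlt
        rw [hiter x1, hiter x2, hf1, hf2] at this
        exact this
  · -- F x not a fort of F^[n+1]; compose to contradict hx2
    rw [not_isFort_iff hy] at hyf
    obtain ⟨δ, hδ, hGM⟩ := hyf
    obtain ⟨ε', hε'0, hε'le, hsm⟩ := shrink hPM.cont hxI hε₀ hδ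
    refine (isFort_iff.1 hx2).2 ε' hε'0 ?_
    rw [iterate_succ_fun F (n+1)]
    refine MA.comp hGM (hFMA.mono (nbd_mono hε'le)) ?_
    intro t ht
    have h3 := abs_lt.1 (hsm t ht)
    exact ⟨hPM.maps ht.1, by constructor <;> linarith⟩


lemma forts_eq_chain (hPM : PMFun a b F v c) {i₀ : ℕ}
    (h0 : {x | IsFort a b (F^[i₀]) x} = {x | IsFort a b (F^[i₀+1]) x}) :
    ∀ k, {x | IsFort a b (F^[i₀+k]) x} = {x | IsFort a b (F^[i₀+k+1]) x} := by
  intro k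
  induction k with
  | zero => exact h0
  | succ m ih =>
    refine Set.Subset.antisymm (fun x hx => fort_mono hPM hx) ?_
    intro x hx
    have : IsFort a b (F^[i₀+m+1+1]) x := by
      have he : i₀ + (m+1) + 1 = i₀ + m + 1 + 1 := by omega
      rwa [he] at hx
    exact stab_step hPM ih x this

end Stmt15Aux

open Stmt15Aux in
theorem stmt15' (a b : ℝ) (F : ℝ → ℝ) (v : ℕ) (c : ℕ → ℝ)
    (hPM : PMFun a b F v c)
    (i₀ : ℕ) (h : {x | IsFort a b (F^[i₀]) x}.ncard = {x | IsFort a b (F^[i₀ + 1]) x}.ncard) :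
    ∀ j : ℕ, 1 ≤ j →
      {x | IsFort a b (F^[i₀ + j]) x} = {x | IsFort a b (F^[i₀]) x} := by
  have hsub : {x | IsFort a b (F^[i₀]) x} ⊆ {x | IsFort a b (F^[i₀+1]) x} :=
    fun x hx => fort_mono hPM hx
  have h0 : {x | IsFort a b (F^[i₀]) x} = {x | IsFort a b (F^[i₀+1]) x} :=
    Set.eq_of_subset_of_ncard_le hsub (le_of_eq h.symm) (forts_finite hPM (i₀+1))
  have hchain := forts_eq_chain hPM h0
  have hall : ∀ j : ℕ, {x | IsFort a b (F^[i₀ + j]) x} = {x | IsFort a b (F^[i₀]) x} := by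
    intro j
    induction j with
    | zero => rfl
    | succ m ih =>
      have : i₀ + (m+1) = i₀ + m + 1 := by omega
      rw [this, ← hchain m, ih]
  exact fun j _ => hall j


/-- once the fort numbers stabilize, they stay constant. -/
theorem stmt15 (a b : ℝ) (F : ℝ → ℝ) (v : ℕ) (c : ℕ → ℝ)
    (hPM : PMFun a b F v c)
    (i₀ : ℕ) (h : nForts a b (F^[i₀]) = nForts a b (F^[i₀ + 1])) :
    ∀ j : ℕ, 1 ≤ j → nForts a b (F^[i₀ + j]) = nForts a b (F^[i₀]) := by
  intro j hj
  unfold nForts at h ⊢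
  rw [stmt15' a b F v c hPM i₀ h j hj]
end
end

section
/- Let I = [a,b] and let F : I → I be a PM function with forts c_1 < … < c_v (c_0 := a, c_{v+1} := b), v ≥ 1 (so F is non-monotone). Then N(F) = N(F∘F) (equivalently, H(F) = 1) if and only if there exists an index i ∈ {0,1,…,v} with F(I) ⊆ [c_i, c_{i+1}]; moreover, when it exists, such a lap [c_i, c_{i+1}] is unique (it is the characteristic interval K(F)). -/
open Set Function

noncomputable section

section Aux

variable {a b : ℝ} {F : ℝ → ℝ} {v : ℕ} {c : ℕ → ℝ}

lemma c_lt_c (hPM : PMFun a b F v c) : ∀ {j i : ℕ}, i < j → j ≤ v + 1 → c i < c j := by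
  intro j
  induction j with
  | zero => intro i h _; omega
  | succ n ih =>
    intro i hij hj
    rcases Nat.lt_succ_iff_lt_or_eq.mp hij with h | h
    · exact lt_trans (ih h (by omega)) (hPM.c_mono n (by omega))
    · subst h; exact hPM.c_mono i (by omega)

lemma c_le_c (hPM : PMFun a b F v c) {i j : ℕ} (hij : i ≤ j) (hj : j ≤ v + 1) : c i ≤ c j := by
  rcases eq_or_lt_of_le hij with rfl | h
  · exact le_rfl
  · exact (c_lt_c hPM h hj).le

lemma c_mem (hPM : PMFun a b F v c) {k : ℕ} (hk : k ≤ v + 1) : c k ∈ Icc a b := by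
  constructor
  · rw [← hPM.c_zero]; exact c_le_c hPM (Nat.zero_le k) hk
  · rw [← hPM.c_last]; exact c_le_c hPM hk le_rfl

lemma mem_lap (hPM : PMFun a b F v c) {x : ℝ} (hx : x ∈ Icc a b) :
    ∃ l ≤ v, c l ≤ x ∧ x ≤ c (l + 1) := by
  classical
  set P : ℕ → Prop := fun k => c k ≤ x with hP
  have hP0 : P 0 := by simp only [hP, hPM.c_zero]; exact hx.1
  refine ⟨Nat.findGreatest P v, Nat.findGreatest_le v,
    Nat.findGreatest_spec (Nat.zero_le v) hP0, ?_⟩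
  rcases eq_or_lt_of_le (Nat.findGreatest_le (P := P) v) with h | h
  · rw [h, hPM.c_last]; exact hx.2
  · have hng := Nat.findGreatest_is_greatest (Nat.lt_succ_self (Nat.findGreatest P v)) h
    exact (not_le.mp hng).le

lemma exists_lap_left (hPM : PMFun a b F v c) {y : ℝ} (h1 : a < y) (h2 : y ≤ b) :
    ∃ l ≤ v, c l < y ∧ y ≤ c (l + 1) := by
  classical
  set P : ℕ → Prop := fun k => c k < y with hP
  have hP0 : P 0 := by simp only [hP, hPM.c_zero]; exact h1
  refine ⟨Nat.findGreatest P v, Nat.findGreatest_le v,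
    Nat.findGreatest_spec (Nat.zero_le v) hP0, ?_⟩
  rcases eq_or_lt_of_le (Nat.findGreatest_le (P := P) v) with h | h
  · rw [h, hPM.c_last]; exact h2
  · have hng := Nat.findGreatest_is_greatest (Nat.lt_succ_self (Nat.findGreatest P v)) h
    exact not_lt.mp hng

lemma exists_lap_right (hPM : PMFun a b F v c) {y : ℝ} (h1 : a ≤ y) (h2 : y < b) :
    ∃ l ≤ v, c l ≤ y ∧ y < c (l + 1) := by
  classical
  set P : ℕ → Prop := fun k => c k ≤ y with hP
  have hP0 : P 0 := by simp only [hP, hPM.c_zero]; exact h1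
  refine ⟨Nat.findGreatest P v, Nat.findGreatest_le v,
    Nat.findGreatest_spec (Nat.zero_le v) hP0, ?_⟩
  rcases eq_or_lt_of_le (Nat.findGreatest_le (P := P) v) with h | h
  · rw [h, hPM.c_last]; exact h2
  · have hng := Nat.findGreatest_is_greatest (Nat.lt_succ_self (Nat.findGreatest P v)) h
    exact not_le.mp hng

lemma glue_mono {f : ℝ → ℝ} {p q r : ℝ} (hpq : p ≤ q) (hqr : q ≤ r)
    (h1 : StrictMonoOn f (Icc p q)) (h2 : StrictMonoOn f (Icc q r)) :
    StrictMonoOn f (Icc p r) := by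
  intro s hs t ht hst
  rcases le_total t q with h | h
  · exact h1 ⟨hs.1, hst.le.trans h⟩ ⟨ht.1, h⟩ hst
  · rcases le_total s q with h' | h'
    · rcases eq_or_lt_of_le h' with h3 | h3
      · subst h3
        exact h2 ⟨le_rfl, hqr⟩ ⟨hst.le, ht.2⟩ hst
      · have hft : f q ≤ f t := by
          rcases eq_or_lt_of_le h with h4 | h4
          · rw [h4]
          · exact (h2 ⟨le_rfl, hqr⟩ ⟨h4.le, ht.2⟩ h4).le
        exact lt_of_lt_of_le (h1 ⟨hs.1, h'⟩ ⟨hpq, le_rfl⟩ h3) hft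
    · exact h2 ⟨h', hs.2⟩ ⟨h, ht.2⟩ hst

lemma glue_anti {f : ℝ → ℝ} {p q r : ℝ} (hpq : p ≤ q) (hqr : q ≤ r)
    (h1 : StrictAntiOn f (Icc p q)) (h2 : StrictAntiOn f (Icc q r)) :
    StrictAntiOn f (Icc p r) := by
  intro s hs t ht hst
  rcases le_total t q with h | h
  · exact h1 ⟨hs.1, hst.le.trans h⟩ ⟨ht.1, h⟩ hst
  · rcases le_total s q with h' | h'
    · rcases eq_or_lt_of_le h' with h3 | h3
      · subst h3
        exact h2 ⟨le_rfl, hqr⟩ ⟨hst.le, ht.2⟩ hst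
      · have hft : f t ≤ f q := by
          rcases eq_or_lt_of_le h with h4 | h4
          · rw [h4]
          · exact (h2 ⟨le_rfl, hqr⟩ ⟨h4.le, ht.2⟩ h4).le
        exact lt_of_le_of_lt hft (h1 ⟨hs.1, h'⟩ ⟨hpq, le_rfl⟩ h3)
    · exact h2 ⟨h', hs.2⟩ ⟨h, ht.2⟩ hst

lemma isFort_not_mono {a b : ℝ} {G : ℝ → ℝ} {x p q : ℝ} (hf : IsFort a b G x)
    (hp : p < x) (hq : x < q)
    (h : StrictMonoOn G (Icc p q) ∨ StrictAntiOn G (Icc p q)) : False := by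
  obtain ⟨hx, hfort⟩ := hf
  have hε : (0:ℝ) < min (x - p) (q - x) := lt_min (by linarith) (by linarith)
  obtain ⟨h1, h2⟩ := hfort _ hε
  have hsub : Icc a b ∩ Ioo (x - min (x - p) (q - x)) (x + min (x - p) (q - x)) ⊆ Icc p q := by
    rintro t ⟨_, ht2⟩
    rw [mem_Ioo] at ht2
    have hm1 := min_le_left (x - p) (q - x)
    have hm2 := min_le_right (x - p) (q - x)
    exact ⟨by linarith [ht2.1], by linarith [ht2.2]⟩
  rcases h with h | h
  · exact h1 (h.mono hsub)
  · exact h2 (h.mono hsub)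

lemma not_fort_interior (hPM : PMFun a b F v c) {l : ℕ} (hl : l ≤ v) {x : ℝ}
    (h1 : c l < x) (h2 : x < c (l + 1)) : ¬ IsFort a b F x :=
  fun hf => isFort_not_mono hf h1 h2 (hPM.lap_mono l hl)

lemma not_fort_a (hPM : PMFun a b F v c) : ¬ IsFort a b F a := by
  rintro ⟨_, hfort⟩
  have h0 : c 0 = a := hPM.c_zero
  have hε : (0:ℝ) < c 1 - c 0 := sub_pos.mpr (hPM.c_mono 0 (Nat.zero_le v))
  obtain ⟨h1, h2⟩ := hfort _ hε
  have hsub : Icc a b ∩ Ioo (a - (c 1 - c 0)) (a + (c 1 - c 0)) ⊆ Icc (c 0) (c 1) := by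
    rintro t ⟨ht1, ht2⟩
    rw [mem_Ioo] at ht2
    rw [mem_Icc] at ht1
    exact ⟨by linarith [ht1.1], by linarith [ht2.2]⟩
  rcases hPM.lap_mono 0 (Nat.zero_le v) with h | h
  · exact h1 (h.mono hsub)
  · exact h2 (h.mono hsub)

lemma not_fort_b (hPM : PMFun a b F v c) : ¬ IsFort a b F b := by
  rintro ⟨_, hfort⟩
  have h0 : c (v + 1) = b := hPM.c_last
  have hε : (0:ℝ) < c (v + 1) - c v := sub_pos.mpr (hPM.c_mono v le_rfl)
  obtain ⟨h1, h2⟩ := hfort _ hε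
  have hsub : Icc a b ∩ Ioo (b - (c (v + 1) - c v)) (b + (c (v + 1) - c v))
      ⊆ Icc (c v) (c (v + 1)) := by
    rintro t ⟨ht1, ht2⟩
    rw [mem_Ioo] at ht2
    rw [mem_Icc] at ht1
    exact ⟨by linarith [ht2.1], by linarith [ht1.2]⟩
  rcases hPM.lap_mono v le_rfl with h | h
  · exact h1 (h.mono hsub)
  · exact h2 (h.mono hsub)

lemma fort_extremum (hPM : PMFun a b F v c) {k : ℕ} (hk : k + 1 ≤ v) :
    (∀ t ∈ Icc (c k) (c (k + 2)), t ≠ c (k + 1) → F t < F (c (k + 1))) ∨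
    (∀ t ∈ Icc (c k) (c (k + 2)), t ≠ c (k + 1) → F (c (k + 1)) < F t) := by
  have hk1 : k ≤ v := by omega
  have hck : c k < c (k + 1) := hPM.c_mono k hk1
  have hck2 : c (k + 1) < c (k + 2) := hPM.c_mono (k + 1) hk
  have hfort := hPM.fort (k + 1) (by omega) hk
  rcases hPM.lap_mono k hk1 with hm1 | hm1 <;> rcases hPM.lap_mono (k + 1) hk with hm2 | hm2
  · exact (isFort_not_mono hfort hck hck2 (Or.inl (glue_mono hck.le hck2.le hm1 hm2))).elim
  · left
    intro t ht hne
    rcases le_or_gt t (c (k + 1)) with h | h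
    · exact hm1 ⟨ht.1, h⟩ ⟨hck.le, le_rfl⟩ (lt_of_le_of_ne h hne)
    · exact hm2 ⟨le_rfl, hck2.le⟩ ⟨h.le, ht.2⟩ h
  · right
    intro t ht hne
    rcases le_or_gt t (c (k + 1)) with h | h
    · exact hm1 ⟨ht.1, h⟩ ⟨hck.le, le_rfl⟩ (lt_of_le_of_ne h hne)
    · exact hm2 ⟨le_rfl, hck2.le⟩ ⟨h.le, ht.2⟩ h
  · exact (isFort_not_mono hfort hck hck2 (Or.inr (glue_anti hck.le hck2.le hm1 hm2))).elim

lemma isFort_of_pairs {a b : ℝ} {G : ℝ → ℝ} {x : ℝ} (hx : x ∈ Icc a b)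
    (h : ∀ ε > (0:ℝ), ∃ x1 x2 : ℝ,
      x1 ∈ Icc a b ∩ Ioo (x - ε) (x + ε) ∧ x2 ∈ Icc a b ∩ Ioo (x - ε) (x + ε) ∧
      x1 < x ∧ x < x2 ∧ ((G x1 < G x ∧ G x2 < G x) ∨ (G x < G x1 ∧ G x < G x2))) :
    IsFort a b G x := by
  refine ⟨hx, fun ε hε => ?_⟩
  obtain ⟨x1, x2, h1, h2, hx1, hx2, hcase⟩ := h ε hε
  have hxS : x ∈ Icc a b ∩ Ioo (x - ε) (x + ε) :=
    ⟨hx, by rw [mem_Ioo]; constructor <;> linarith⟩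
  constructor
  · intro hm
    rcases hcase with ⟨hA, hB⟩ | ⟨hA, hB⟩
    · exact absurd (hm hxS h2 hx2) (not_lt.mpr hB.le)
    · exact absurd (hm h1 hxS hx1) (not_lt.mpr hA.le)
  · intro hm
    rcases hcase with ⟨hA, hB⟩ | ⟨hA, hB⟩
    · exact absurd (hm h1 hxS hx1) (not_lt.mpr hA.le)
    · exact absurd (hm hxS h2 hx2) (not_lt.mpr hB.le)

lemma fort_comp_of_fort (hPM : PMFun a b F v c) {k : ℕ} (hk : k + 1 ≤ v) :
    IsFort a b (F ∘ F) (c (k + 1)) := by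
  have hck : c k < c (k + 1) := hPM.c_mono k (by omega)
  have hck2 : c (k + 1) < c (k + 2) := hPM.c_mono (k + 1) hk
  have hmemk : c k ∈ Icc a b := c_mem hPM (by omega)
  have hmem : c (k + 1) ∈ Icc a b := c_mem hPM (by omega)
  have hmem2 : c (k + 2) ∈ Icc a b := c_mem hPM (by omega)
  have hFk : F (c k) ∈ Icc a b := hPM.maps hmemk
  have hyI : F (c (k + 1)) ∈ Icc a b := hPM.maps hmem
  have hcw := hPM.cont (c (k + 1)) hmem
  rw [Metric.continuousWithinAt_iff] at hcw
  have haux : ∀ t : ℝ, t ∈ Icc (c k) (c (k + 2)) → t ∈ Icc a b :=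
    fun t ht => ⟨le_trans hmemk.1 ht.1, le_trans ht.2 hmem2.2⟩
  rcases fort_extremum hPM hk with hext | hext
  · -- strict local maximum at c (k+1)
    have hFklt : F (c k) < F (c (k + 1)) := hext (c k) ⟨le_rfl, by linarith⟩ (ne_of_lt hck)
    have hay : a < F (c (k + 1)) := lt_of_le_of_lt hFk.1 hFklt
    obtain ⟨l, hl, hly, hyl⟩ := exists_lap_left hPM hay hyI.2
    obtain ⟨ε0, hε0, hcw⟩ := hcw (F (c (k + 1)) - c l) (by linarith)
    apply isFort_of_pairs hmem
    intro ε hε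
    have hε1pos : 0 < min (min ε ε0) (min (c (k + 1) - c k) (c (k + 2) - c (k + 1))) :=
      lt_min (lt_min hε hε0) (lt_min (by linarith) (by linarith))
    set ε1 := min (min ε ε0) (min (c (k + 1) - c k) (c (k + 2) - c (k + 1))) with hε1def
    have he : ε1 ≤ ε := le_trans (min_le_left _ _) (min_le_left _ _)
    have he0 : ε1 ≤ ε0 := le_trans (min_le_left _ _) (min_le_right _ _)
    have hekl : ε1 ≤ c (k + 1) - c k := le_trans (min_le_right _ _) (min_le_left _ _)
    have hekr : ε1 ≤ c (k + 2) - c (k + 1) := le_trans (min_le_right _ _) (min_le_right _ _)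
    have hx1lap : c (k + 1) - ε1 / 2 ∈ Icc (c k) (c (k + 2)) := ⟨by linarith, by linarith⟩
    have hx2lap : c (k + 1) + ε1 / 2 ∈ Icc (c k) (c (k + 2)) := ⟨by linarith, by linarith⟩
    have hx1I := haux _ hx1lap
    have hx2I := haux _ hx2lap
    have hd1 : dist (c (k + 1) - ε1 / 2) (c (k + 1)) < ε0 := by
      rw [Real.dist_eq, abs_lt]; constructor <;> linarith
    have hd2 : dist (c (k + 1) + ε1 / 2) (c (k + 1)) < ε0 := by
      rw [Real.dist_eq, abs_lt]; constructor <;> linarith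
    have hF1 := hcw hx1I hd1
    have hF2 := hcw hx2I hd2
    rw [Real.dist_eq, abs_lt] at hF1 hF2
    have hFx1lt : F (c (k + 1) - ε1 / 2) < F (c (k + 1)) :=
      hext _ hx1lap (ne_of_lt (by linarith))
    have hFx2lt : F (c (k + 1) + ε1 / 2) < F (c (k + 1)) :=
      hext _ hx2lap (ne_of_gt (by linarith))
    have hK1 : F (c (k + 1) - ε1 / 2) ∈ Icc (c l) (c (l + 1)) :=
      ⟨by linarith [hF1.1], by linarith⟩
    have hK2 : F (c (k + 1) + ε1 / 2) ∈ Icc (c l) (c (l + 1)) :=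
      ⟨by linarith [hF2.1], by linarith⟩
    have hyK : F (c (k + 1)) ∈ Icc (c l) (c (l + 1)) := ⟨hly.le, hyl⟩
    refine ⟨_, _, ⟨hx1I, by rw [mem_Ioo]; constructor <;> linarith⟩,
      ⟨hx2I, by rw [mem_Ioo]; constructor <;> linarith⟩, by linarith, by linarith, ?_⟩
    simp only [Function.comp_apply]
    rcases hPM.lap_mono l hl with hg | hg
    · exact Or.inl ⟨hg hK1 hyK hFx1lt, hg hK2 hyK hFx2lt⟩
    · exact Or.inr ⟨hg hK1 hyK hFx1lt, hg hK2 hyK hFx2lt⟩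
  · -- strict local minimum at c (k+1)
    have hFkgt : F (c (k + 1)) < F (c k) := hext (c k) ⟨le_rfl, by linarith⟩ (ne_of_lt hck)
    have hyb : F (c (k + 1)) < b := lt_of_lt_of_le hFkgt hFk.2
    obtain ⟨l, hl, hly, hyl⟩ := exists_lap_right hPM hyI.1 hyb
    obtain ⟨ε0, hε0, hcw⟩ := hcw (c (l + 1) - F (c (k + 1))) (by linarith)
    apply isFort_of_pairs hmem
    intro ε hε
    have hε1pos : 0 < min (min ε ε0) (min (c (k + 1) - c k) (c (k + 2) - c (k + 1))) :=
      lt_min (lt_min hε hε0) (lt_min (by linarith) (by linarith))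
    set ε1 := min (min ε ε0) (min (c (k + 1) - c k) (c (k + 2) - c (k + 1))) with hε1def
    have he : ε1 ≤ ε := le_trans (min_le_left _ _) (min_le_left _ _)
    have he0 : ε1 ≤ ε0 := le_trans (min_le_left _ _) (min_le_right _ _)
    have hekl : ε1 ≤ c (k + 1) - c k := le_trans (min_le_right _ _) (min_le_left _ _)
    have hekr : ε1 ≤ c (k + 2) - c (k + 1) := le_trans (min_le_right _ _) (min_le_right _ _)
    have hx1lap : c (k + 1) - ε1 / 2 ∈ Icc (c k) (c (k + 2)) := ⟨by linarith, by linarith⟩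
    have hx2lap : c (k + 1) + ε1 / 2 ∈ Icc (c k) (c (k + 2)) := ⟨by linarith, by linarith⟩
    have hx1I := haux _ hx1lap
    have hx2I := haux _ hx2lap
    have hd1 : dist (c (k + 1) - ε1 / 2) (c (k + 1)) < ε0 := by
      rw [Real.dist_eq, abs_lt]; constructor <;> linarith
    have hd2 : dist (c (k + 1) + ε1 / 2) (c (k + 1)) < ε0 := by
      rw [Real.dist_eq, abs_lt]; constructor <;> linarith
    have hF1 := hcw hx1I hd1
    have hF2 := hcw hx2I hd2
    rw [Real.dist_eq, abs_lt] at hF1 hF2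
    have hFx1gt : F (c (k + 1)) < F (c (k + 1) - ε1 / 2) :=
      hext _ hx1lap (ne_of_lt (by linarith))
    have hFx2gt : F (c (k + 1)) < F (c (k + 1) + ε1 / 2) :=
      hext _ hx2lap (ne_of_gt (by linarith))
    have hK1 : F (c (k + 1) - ε1 / 2) ∈ Icc (c l) (c (l + 1)) :=
      ⟨by linarith, by linarith [hF1.2]⟩
    have hK2 : F (c (k + 1) + ε1 / 2) ∈ Icc (c l) (c (l + 1)) :=
      ⟨by linarith, by linarith [hF2.2]⟩
    have hyK : F (c (k + 1)) ∈ Icc (c l) (c (l + 1)) := ⟨hly, hyl.le⟩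
    refine ⟨_, _, ⟨hx1I, by rw [mem_Ioo]; constructor <;> linarith⟩,
      ⟨hx2I, by rw [mem_Ioo]; constructor <;> linarith⟩, by linarith, by linarith, ?_⟩
    simp only [Function.comp_apply]
    rcases hPM.lap_mono l hl with hg | hg
    · exact Or.inr ⟨hg hyK hK1 hFx1gt, hg hyK hK2 hFx2gt⟩
    · exact Or.inl ⟨hg hyK hK1 hFx1gt, hg hyK hK2 hFx2gt⟩

lemma fort_comp_of_crossing (hPM : PMFun a b F v c) {l k : ℕ} (hl : l ≤ v) (hk : k + 1 ≤ v)
    {x : ℝ} (hx1 : c l < x) (hx2 : x < c (l + 1)) (hFx : F x = c (k + 1)) :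
    IsFort a b (F ∘ F) x := by
  have hck : c k < c (k + 1) := hPM.c_mono k (by omega)
  have hck2 : c (k + 1) < c (k + 2) := hPM.c_mono (k + 1) hk
  have hclI : c l ∈ Icc a b := c_mem hPM (by omega)
  have hcl1I : c (l + 1) ∈ Icc a b := c_mem hPM (by omega)
  have hmem : x ∈ Icc a b := ⟨le_trans hclI.1 hx1.le, le_trans hx2.le hcl1I.2⟩
  have hxlap : x ∈ Icc (c l) (c (l + 1)) := ⟨hx1.le, hx2.le⟩
  have hcw := hPM.cont x hmem
  rw [Metric.continuousWithinAt_iff] at hcw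
  obtain ⟨ε0, hε0, hcw⟩ := hcw (min (c (k + 1) - c k) (c (k + 2) - c (k + 1)))
    (lt_min (by linarith) (by linarith))
  apply isFort_of_pairs hmem
  intro ε hε
  have hε1pos : 0 < min (min ε ε0) (min (x - c l) (c (l + 1) - x)) :=
    lt_min (lt_min hε hε0) (lt_min (by linarith) (by linarith))
  set ε1 := min (min ε ε0) (min (x - c l) (c (l + 1) - x)) with hε1def
  have he : ε1 ≤ ε := le_trans (min_le_left _ _) (min_le_left _ _)
  have he0 : ε1 ≤ ε0 := le_trans (min_le_left _ _) (min_le_right _ _)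
  have hel : ε1 ≤ x - c l := le_trans (min_le_right _ _) (min_le_left _ _)
  have her : ε1 ≤ c (l + 1) - x := le_trans (min_le_right _ _) (min_le_right _ _)
  have hδ1 : min (c (k + 1) - c k) (c (k + 2) - c (k + 1)) ≤ c (k + 1) - c k := min_le_left _ _
  have hδ2 : min (c (k + 1) - c k) (c (k + 2) - c (k + 1)) ≤ c (k + 2) - c (k + 1) :=
    min_le_right _ _
  have hx1lap : x - ε1 / 2 ∈ Icc (c l) (c (l + 1)) := ⟨by linarith, by linarith⟩
  have hx2lap : x + ε1 / 2 ∈ Icc (c l) (c (l + 1)) := ⟨by linarith, by linarith⟩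
  have hx1I : x - ε1 / 2 ∈ Icc a b := ⟨le_trans hclI.1 hx1lap.1, le_trans hx1lap.2 hcl1I.2⟩
  have hx2I : x + ε1 / 2 ∈ Icc a b := ⟨le_trans hclI.1 hx2lap.1, le_trans hx2lap.2 hcl1I.2⟩
  have hd1 : dist (x - ε1 / 2) x < ε0 := by
    rw [Real.dist_eq, abs_lt]; constructor <;> linarith
  have hd2 : dist (x + ε1 / 2) x < ε0 := by
    rw [Real.dist_eq, abs_lt]; constructor <;> linarith
  have hF1 := hcw hx1I hd1
  have hF2 := hcw hx2I hd2
  rw [Real.dist_eq, hFx, abs_lt] at hF1 hF2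
  have hK1 : F (x - ε1 / 2) ∈ Icc (c k) (c (k + 2)) :=
    ⟨by linarith [hF1.1], by linarith [hF1.2]⟩
  have hK2 : F (x + ε1 / 2) ∈ Icc (c k) (c (k + 2)) :=
    ⟨by linarith [hF2.1], by linarith [hF2.2]⟩
  have hne1 : F (x - ε1 / 2) ≠ c (k + 1) := by
    rw [← hFx]
    rcases hPM.lap_mono l hl with hg | hg
    · exact ne_of_lt (hg hx1lap hxlap (by linarith))
    · exact ne_of_gt (hg hx1lap hxlap (by linarith))
  have hne2 : F (x + ε1 / 2) ≠ c (k + 1) := by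
    rw [← hFx]
    rcases hPM.lap_mono l hl with hg | hg
    · exact ne_of_gt (hg hxlap hx2lap (by linarith))
    · exact ne_of_lt (hg hxlap hx2lap (by linarith))
  refine ⟨_, _, ⟨hx1I, by rw [mem_Ioo]; constructor <;> linarith⟩,
    ⟨hx2I, by rw [mem_Ioo]; constructor <;> linarith⟩, by linarith, by linarith, ?_⟩
  simp only [Function.comp_apply]
  rcases fort_extremum hPM hk with hext | hext
  · left
    constructor
    · have h := hext _ hK1 hne1; rw [hFx]; exact h
    · have h := hext _ hK2 hne2; rw [hFx]; exact h
  · right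
    constructor
    · have h := hext _ hK1 hne1; rw [hFx]; exact h
    · have h := hext _ hK2 hne2; rw [hFx]; exact h

lemma isFort_iff (hPM : PMFun a b F v c) {x : ℝ} :
    IsFort a b F x ↔ ∃ k, 1 ≤ k ∧ k ≤ v ∧ x = c k := by
  constructor
  · intro hf
    obtain ⟨l, hl, h1, h2⟩ := mem_lap hPM hf.1
    rcases eq_or_lt_of_le h1 with he | h1'
    · rcases Nat.eq_zero_or_pos l with rfl | hpos
      · have hxa : x = a := by rw [← he, hPM.c_zero]
        exact absurd (hxa ▸ hf) (not_fort_a hPM)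
      · exact ⟨l, hpos, hl, he.symm⟩
    · rcases eq_or_lt_of_le h2 with he | h2'
      · rcases eq_or_lt_of_le hl with rfl | hlt
        · have hxb : x = b := by rw [he, hPM.c_last]
          exact absurd (hxb ▸ hf) (not_fort_b hPM)
        · exact ⟨l + 1, by omega, hlt, he⟩
      · exact absurd hf (not_fort_interior hPM hl h1' h2')
  · rintro ⟨k, h1, h2, rfl⟩
    exact hPM.fort k h1 h2

lemma ncard_img (hPM : PMFun a b F v c) : (c '' Set.Icc 1 v).ncard = v := by
  have hinj : Set.InjOn c (Set.Icc 1 v) := by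
    intro i hi j hj hij
    have hi2 : i ≤ v := hi.2
    have hj2 : j ≤ v := hj.2
    by_contra hne
    rcases Nat.lt_or_ge i j with h | h
    · exact absurd hij (ne_of_lt (c_lt_c hPM h (by omega)))
    · have h' : j < i := by omega
      exact absurd hij.symm (ne_of_lt (c_lt_c hPM h' (by omega)))
  rw [Set.ncard_image_of_injOn hinj, ← Finset.coe_Icc, Set.ncard_coe_finset, Nat.card_Icc]
  omega

lemma nForts_eq_v (hPM : PMFun a b F v c) : nForts a b F = v := by
  have hs : {x | IsFort a b F x} = c '' Set.Icc 1 v := by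
    ext x
    simp only [mem_setOf_eq, Set.mem_image, Set.mem_Icc]
    rw [isFort_iff hPM]
    constructor
    · rintro ⟨k, h1, h2, rfl⟩; exact ⟨k, ⟨h1, h2⟩, rfl⟩
    · rintro ⟨k, ⟨h1, h2⟩, rfl⟩; exact ⟨k, h1, h2, rfl⟩
  rw [nForts, hs, ncard_img hPM]

lemma adjacent_lo_hi (hPM : PMFun a b F v c) {j k : ℕ} (hk : k + 1 ≤ v)
    (hLo : ∀ p ∈ Icc (c k) (c (k + 1)), F p ≤ c j)
    (hHi : ∀ p ∈ Icc (c (k + 1)) (c (k + 2)), c j ≤ F p) : False := by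
  have hck : c k < c (k + 1) := hPM.c_mono k (by omega)
  have hck2 : c (k + 1) < c (k + 2) := hPM.c_mono (k + 1) hk
  have hmid : F (c (k + 1)) = c j :=
    le_antisymm (hLo _ ⟨hck.le, le_rfl⟩) (hHi _ ⟨le_rfl, hck2.le⟩)
  have hm1 : StrictMonoOn F (Icc (c k) (c (k + 1))) := by
    rcases hPM.lap_mono k (by omega) with h | h
    · exact h
    · exact absurd (h ⟨le_rfl, hck.le⟩ ⟨hck.le, le_rfl⟩ hck)
        (not_lt.mpr (by rw [hmid]; exact hLo _ ⟨le_rfl, hck.le⟩))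
  have hm2 : StrictMonoOn F (Icc (c (k + 1)) (c (k + 2))) := by
    rcases hPM.lap_mono (k + 1) hk with h | h
    · exact h
    · exact absurd (h ⟨le_rfl, hck2.le⟩ ⟨hck2.le, le_rfl⟩ hck2)
        (not_lt.mpr (by rw [hmid]; exact hHi _ ⟨hck2.le, le_rfl⟩))
  exact isFort_not_mono (hPM.fort (k + 1) (by omega) hk) hck hck2
    (Or.inl (glue_mono hck.le hck2.le hm1 hm2))

lemma adjacent_hi_lo (hPM : PMFun a b F v c) {j k : ℕ} (hk : k + 1 ≤ v)
    (hHi : ∀ p ∈ Icc (c k) (c (k + 1)), c j ≤ F p)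
    (hLo : ∀ p ∈ Icc (c (k + 1)) (c (k + 2)), F p ≤ c j) : False := by
  have hck : c k < c (k + 1) := hPM.c_mono k (by omega)
  have hck2 : c (k + 1) < c (k + 2) := hPM.c_mono (k + 1) hk
  have hmid : F (c (k + 1)) = c j :=
    le_antisymm (hLo _ ⟨le_rfl, hck2.le⟩) (hHi _ ⟨hck.le, le_rfl⟩)
  have hm1 : StrictAntiOn F (Icc (c k) (c (k + 1))) := by
    rcases hPM.lap_mono k (by omega) with h | h
    · exact absurd (h ⟨le_rfl, hck.le⟩ ⟨hck.le, le_rfl⟩ hck)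
        (not_lt.mpr (by rw [hmid]; exact hHi _ ⟨le_rfl, hck.le⟩))
    · exact h
  have hm2 : StrictAntiOn F (Icc (c (k + 1)) (c (k + 2))) := by
    rcases hPM.lap_mono (k + 1) hk with h | h
    · exact absurd (h ⟨le_rfl, hck2.le⟩ ⟨hck2.le, le_rfl⟩ hck2)
        (not_lt.mpr (by rw [hmid]; exact hLo _ ⟨hck2.le, le_rfl⟩))
    · exact h
  exact isFort_not_mono (hPM.fort (k + 1) (by omega) hk) hck hck2
    (Or.inr (glue_anti hck.le hck2.le hm1 hm2))

lemma exists_mixed_lap (hPM : PMFun a b F v c) {j : ℕ} {u w : ℝ} (hj1 : 1 ≤ j) (hj2 : j ≤ v)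
    (hu : u ∈ Icc a b) (hw : w ∈ Icc a b) (hu' : F u < c j) (hw' : c j < F w) :
    ∃ l ≤ v, ∃ p ∈ Icc (c l) (c (l + 1)), ∃ q ∈ Icc (c l) (c (l + 1)),
      F p < c j ∧ c j < F q := by
  classical
  by_contra hcon
  push_neg at hcon
  have hLoHi : ∀ l ≤ v, (∀ p ∈ Icc (c l) (c (l + 1)), F p ≤ c j) ∨
      (∀ p ∈ Icc (c l) (c (l + 1)), c j ≤ F p) := by
    intro l hl
    by_cases hex : ∃ p ∈ Icc (c l) (c (l + 1)), F p < c j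
    · obtain ⟨p, hp, hp'⟩ := hex
      exact Or.inl (fun q hq => hcon l hl p hp q hq hp')
    · push_neg at hex
      exact Or.inr (fun p hp => hex p hp)
  obtain ⟨lu, hlu, hul, hul2⟩ := mem_lap hPM hu
  obtain ⟨lw, hlw, hwl, hwl2⟩ := mem_lap hPM hw
  have hLou : ∀ p ∈ Icc (c lu) (c (lu + 1)), F p ≤ c j := by
    rcases hLoHi lu hlu with h | h
    · exact h
    · exact absurd (h u ⟨hul, hul2⟩) (not_le.mpr hu')
  have hHiw : ∀ p ∈ Icc (c lw) (c (lw + 1)), c j ≤ F p := by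
    rcases hLoHi lw hlw with h | h
    · exact absurd (h w ⟨hwl, hwl2⟩) (not_le.mpr hw')
    · exact h
  rcases Nat.lt_trichotomy lu lw with hlt | heq | hlt
  · have hex : ∃ m, ∀ p ∈ Icc (c (lu + m)) (c (lu + m + 1)), c j ≤ F p :=
      ⟨lw - lu, by rw [Nat.add_sub_cancel' hlt.le]; exact hHiw⟩
    have hmspec := Nat.find_spec hex
    have hm1 : 1 ≤ Nat.find hex := by
      rcases Nat.eq_zero_or_pos (Nat.find hex) with h0 | h
      · exfalso
        have := Nat.find_spec hex
        rw [h0] at this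
        simp only [Nat.add_zero] at this
        exact absurd (this u ⟨hul, hul2⟩) (not_le.mpr hu')
      · exact h
    have hmle : Nat.find hex ≤ lw - lu :=
      Nat.find_min' hex (by rw [Nat.add_sub_cancel' hlt.le]; exact hHiw)
    obtain ⟨m', hm'⟩ : ∃ m', Nat.find hex = m' + 1 := ⟨Nat.find hex - 1, by omega⟩
    have hkv : lu + m' + 1 ≤ v := by omega
    have hnotHi : ¬ ∀ p ∈ Icc (c (lu + m')) (c (lu + m' + 1)), c j ≤ F p :=
      Nat.find_min hex (by omega)
    have hLok : ∀ p ∈ Icc (c (lu + m')) (c (lu + m' + 1)), F p ≤ c j := by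
      rcases hLoHi (lu + m') (by omega) with h | h
      · exact h
      · exact absurd h hnotHi
    rw [hm'] at hmspec
    exact adjacent_lo_hi hPM hkv hLok hmspec
  · rw [heq] at hLou
    exact absurd (hLou w ⟨hwl, hwl2⟩) (not_le.mpr hw')
  · have hex : ∃ m, ∀ p ∈ Icc (c (lw + m)) (c (lw + m + 1)), F p ≤ c j :=
      ⟨lu - lw, by rw [Nat.add_sub_cancel' hlt.le]; exact hLou⟩
    have hmspec := Nat.find_spec hex
    have hm1 : 1 ≤ Nat.find hex := by
      rcases Nat.eq_zero_or_pos (Nat.find hex) with h0 | h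
      · exfalso
        have := Nat.find_spec hex
        rw [h0] at this
        simp only [Nat.add_zero] at this
        exact absurd (this w ⟨hwl, hwl2⟩) (not_le.mpr hw')
      · exact h
    have hmle : Nat.find hex ≤ lu - lw :=
      Nat.find_min' hex (by rw [Nat.add_sub_cancel' hlt.le]; exact hLou)
    obtain ⟨m', hm'⟩ : ∃ m', Nat.find hex = m' + 1 := ⟨Nat.find hex - 1, by omega⟩
    have hkv : lw + m' + 1 ≤ v := by omega
    have hnotLo : ¬ ∀ p ∈ Icc (c (lw + m')) (c (lw + m' + 1)), F p ≤ c j :=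
      Nat.find_min hex (by omega)
    have hHik : ∀ p ∈ Icc (c (lw + m')) (c (lw + m' + 1)), c j ≤ F p := by
      rcases hLoHi (lw + m') (by omega) with h | h
      · exact absurd h hnotLo
      · exact h
    rw [hm'] at hmspec
    exact adjacent_hi_lo hPM hkv hHik hmspec

lemma reflect_lt_of_mono {g : ℝ → ℝ} {K : Set ℝ} (hg : StrictMonoOn g K) {s t : ℝ}
    (hs : s ∈ K) (ht : t ∈ K) (h : g s < g t) : s < t := by
  rcases lt_trichotomy s t with h' | h' | h'
  · exact h'
  · exact absurd h (by rw [h']; exact lt_irrefl _)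
  · exact absurd (hg ht hs h') (not_lt.mpr h.le)

lemma reflect_lt_of_anti {g : ℝ → ℝ} {K : Set ℝ} (hg : StrictAntiOn g K) {s t : ℝ}
    (hs : s ∈ K) (ht : t ∈ K) (h : g s < g t) : t < s := by
  rcases lt_trichotomy t s with h' | h' | h'
  · exact h'
  · exact absurd h (by rw [h']; exact lt_irrefl _)
  · exact absurd (hg hs ht h') (not_lt.mpr h.le)

end Aux

/-- `N(F) = N(F∘F)` iff some lap `[c i, c (i+1)]` contains `F(I)`,
and such a lap is unique (the characteristic interval). -/
theorem stmt16 (a b : ℝ) (F : ℝ → ℝ) (v : ℕ) (c : ℕ → ℝ)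
    (hPM : PMFun a b F v c) (hv : 1 ≤ v) :
    (nForts a b F = nForts a b (F ∘ F) ↔
      ∃ i ≤ v, Set.MapsTo F (Set.Icc a b) (Set.Icc (c i) (c (i + 1)))) ∧
    (∀ i ≤ v, ∀ i' ≤ v,
      Set.MapsTo F (Set.Icc a b) (Set.Icc (c i) (c (i + 1))) →
      Set.MapsTo F (Set.Icc a b) (Set.Icc (c i') (c (i' + 1))) → i = i') := by
  classical
  constructor
  · constructor
    · -- N(F) = N(F∘F) → F(I) contained in some lap
      intro h
      by_contra hno
      push_neg at hno
      -- find j, u, w with F u < c j < F w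
      set P : ℕ → Prop := fun k => ∀ x ∈ Icc a b, c k ≤ F x with hPdef
      have hP0 : P 0 := fun x hx => by rw [hPM.c_zero]; exact (hPM.maps hx).1
      set i := Nat.findGreatest P v with hidef
      have hiv : i ≤ v := Nat.findGreatest_le v
      have hPi : P i := Nat.findGreatest_spec (Nat.zero_le v) hP0
      have hnomaps : ¬ ∀ x ∈ Icc a b, F x ∈ Icc (c i) (c (i + 1)) := hno i hiv
      push_neg at hnomaps
      obtain ⟨w, hw, hwn⟩ := hnomaps
      have hw2 : c (i + 1) < F w := by
        by_contra hle
        push_neg at hle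
        exact hwn ⟨hPi w hw, hle⟩
      have hiv' : i < v := by
        by_contra hge
        push_neg at hge
        have hieq : i = v := le_antisymm hiv hge
        rw [hieq, hPM.c_last] at hw2
        exact absurd (hPM.maps hw).2 (not_le.mpr hw2)
      have hnP : ¬ P (i + 1) :=
        Nat.findGreatest_is_greatest (Nat.lt_succ_self _) (by omega)
      simp only [hPdef] at hnP
      push_neg at hnP
      obtain ⟨u, hu, hu2⟩ := hnP
      -- mixed lap
      obtain ⟨l, hl, p, hp, q, hq, hp2, hq2⟩ :=
        exists_mixed_lap hPM (j := i + 1) (by omega) (by omega) hu hw hu2 hw2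
      -- IVT crossing point
      have hlapI : Icc (c l) (c (l + 1)) ⊆ Icc a b := fun t ht =>
        ⟨le_trans (c_mem hPM (by omega : l ≤ v + 1)).1 ht.1,
         le_trans ht.2 (c_mem hPM (by omega : l + 1 ≤ v + 1)).2⟩
      have hpq : p ≠ q := fun hne => by rw [hne] at hp2; linarith
      obtain ⟨x, hxmem, hFx⟩ : ∃ x, (c l < x ∧ x < c (l + 1)) ∧ F x = c (i + 1) := by
        rcases lt_or_gt_of_ne hpq with hlt | hlt
        · have hconts : ContinuousOn F (Icc p q) :=
            hPM.cont.mono (fun t ht => hlapI ⟨le_trans hp.1 ht.1, le_trans ht.2 hq.2⟩)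
          have hiv2 := intermediate_value_Ioo hlt.le hconts
          obtain ⟨x, hx, hFx⟩ := hiv2 ⟨hp2, hq2⟩
          exact ⟨x, ⟨lt_of_le_of_lt hp.1 hx.1, lt_of_lt_of_le hx.2 hq.2⟩, hFx⟩
        · have hconts : ContinuousOn F (Icc q p) :=
            hPM.cont.mono (fun t ht => hlapI ⟨le_trans hq.1 ht.1, le_trans ht.2 hp.2⟩)
          have hiv2 := intermediate_value_Ioo' hlt.le hconts
          obtain ⟨x, hx, hFx⟩ := hiv2 ⟨hp2, hq2⟩
          exact ⟨x, ⟨lt_of_le_of_lt hq.1 hx.1, lt_of_lt_of_le hx.2 hp.2⟩, hFx⟩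
      have hxfort2 : IsFort a b (F ∘ F) x :=
        fort_comp_of_crossing hPM hl (by omega : i + 1 ≤ v) hxmem.1 hxmem.2 hFx
      have hxnot : ¬ IsFort a b F x := not_fort_interior hPM hl hxmem.1 hxmem.2
      -- counting
      have hsub : insert x (c '' Set.Icc 1 v) ⊆ {y | IsFort a b (F ∘ F) y} := by
        rintro t ht
        rcases ht with rfl | ⟨k', hk', rfl⟩
        · exact hxfort2
        · have hk1 := hk'.1
          have hk2 := hk'.2
          obtain ⟨k'', rfl⟩ : ∃ k'', k' = k'' + 1 := ⟨k' - 1, by omega⟩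
          exact fort_comp_of_fort hPM (by omega)
      have hxim : x ∉ c '' Set.Icc 1 v := by
        rintro ⟨k', hk', hxx⟩
        exact hxnot (hxx ▸ hPM.fort k' hk'.1 hk'.2)
      have hvF : nForts a b F = v := nForts_eq_v hPM
      rcases Set.finite_or_infinite {y | IsFort a b (F ∘ F) y} with hfin2 | hinf2
      · have h1 := Set.ncard_le_ncard hsub hfin2
        rw [Set.ncard_insert_of_notMem hxim ((Set.finite_Icc 1 v).image c),
          ncard_img hPM] at h1
        have h2 : nForts a b (F ∘ F) = {y | IsFort a b (F ∘ F) y}.ncard := rfl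
        rw [hvF] at h
        omega
      · have h0 : nForts a b (F ∘ F) = 0 := Set.Infinite.ncard hinf2
        rw [hvF, h0] at h
        omega
    · -- F(I) contained in a lap → N(F) = N(F∘F)
      rintro ⟨i, hi, hmap⟩
      have hK : ∀ s ∈ Icc a b, F s ∈ Icc (c i) (c (i + 1)) := fun s hs => hmap hs
      have hset : ∀ x, IsFort a b F x ↔ IsFort a b (F ∘ F) x := by
        intro x
        constructor
        · rintro ⟨hx, hfort⟩
          refine ⟨hx, fun ε hε => ?_⟩
          obtain ⟨hnm, hna⟩ := hfort ε hε
          have hSsub : Icc a b ∩ Ioo (x - ε) (x + ε) ⊆ Icc a b := inter_subset_left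
          rcases hPM.lap_mono i hi with hg | hg
          · constructor
            · intro hm
              apply hnm
              intro s hs t ht hst
              exact reflect_lt_of_mono hg (hK s (hSsub hs)) (hK t (hSsub ht)) (hm hs ht hst)
            · intro hm
              apply hna
              intro s hs t ht hst
              exact reflect_lt_of_mono hg (hK t (hSsub ht)) (hK s (hSsub hs)) (hm hs ht hst)
          · constructor
            · intro hm
              apply hna
              intro s hs t ht hst
              exact reflect_lt_of_anti hg (hK s (hSsub hs)) (hK t (hSsub ht)) (hm hs ht hst)
            · intro hm
              apply hnm
              intro s hs t ht hst
              exact reflect_lt_of_anti hg (hK t (hSsub ht)) (hK s (hSsub hs)) (hm hs ht hst)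
        · rintro ⟨hx, hfort⟩
          refine ⟨hx, fun ε hε => ?_⟩
          obtain ⟨hnm, hna⟩ := hfort ε hε
          have hSsub : Icc a b ∩ Ioo (x - ε) (x + ε) ⊆ Icc a b := inter_subset_left
          rcases hPM.lap_mono i hi with hg | hg
          · constructor
            · intro hm
              exact hnm (fun s hs t ht hst =>
                hg (hK s (hSsub hs)) (hK t (hSsub ht)) (hm hs ht hst))
            · intro hm
              exact hna (fun s hs t ht hst =>
                hg (hK t (hSsub ht)) (hK s (hSsub hs)) (hm hs ht hst))
          · constructor
            · intro hm
              exact hna (fun s hs t ht hst =>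
                hg (hK s (hSsub hs)) (hK t (hSsub ht)) (hm hs ht hst))
            · intro hm
              exact hnm (fun s hs t ht hst =>
                hg (hK t (hSsub ht)) (hK s (hSsub hs)) (hm hs ht hst))
      have hseteq : {x | IsFort a b F x} = {x | IsFort a b (F ∘ F) x} :=
        Set.ext fun x => hset x
      show ({x | IsFort a b F x}).ncard = ({x | IsFort a b (F ∘ F) x}).ncard
      rw [hseteq]
  · -- uniqueness
    have key : ∀ i i', i ≤ v → i' ≤ v → i < i' →
        Set.MapsTo F (Set.Icc a b) (Set.Icc (c i) (c (i + 1))) →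
        Set.MapsTo F (Set.Icc a b) (Set.Icc (c i') (c (i' + 1))) → False := by
      intro i i' hi hi' hlt h h'
      have hconst : ∀ x ∈ Icc a b, F x = c (i + 1) := by
        intro x hx
        have h1 := (h hx).2
        have h2 := (h' hx).1
        have h3 : c (i + 1) ≤ c i' := c_le_c hPM (by omega) (by omega)
        linarith
      have hc1 : c 1 ∈ Icc a b := c_mem hPM (by omega)
      have haI : a ∈ Icc a b := ⟨le_rfl, hPM.lt.le⟩
      have h01 : c 0 < c 1 := hPM.c_mono 0 (Nat.zero_le v)
      have ha1 : a < c 1 := by rw [← hPM.c_zero]; exact h01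
      have heq : F a = F (c 1) := by rw [hconst a haI, hconst (c 1) hc1]
      have haL : a ∈ Icc (c 0) (c 1) := ⟨hPM.c_zero.le, ha1.le⟩
      have hc1L : c 1 ∈ Icc (c 0) (c 1) := ⟨h01.le, le_rfl⟩
      rcases hPM.lap_mono 0 (Nat.zero_le v) with hg | hg
      · exact absurd heq (ne_of_lt (hg haL hc1L ha1))
      · exact absurd heq (ne_of_gt (hg haL hc1L ha1))
    intro i hi i' hi' h h'
    rcases Nat.lt_trichotomy i i' with hlt | heq | hlt
    · exact (key i i' hi hi' hlt h h').elim
    · exact heq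
    · exact (key i' i hi' hi hlt h' h).elim
end
end
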